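/- arXiv:2005.06871 — 5 statements merged into one kernel-verified Lean document; each statement's English description precedes it below -/
import Mathlib

section
/- Let T > 0, let V : [0,T] → ℝ be continuous, strictly increasing, and continuously differentiable on (0,T), and let g : ℝ → ℝ be continuous with |g(y)| ≤ c·exp(λy²) for all y ∈ ℝ, where c > 0 and 0 < λ < (2(V(T) − V(0)))⁻¹. Define u(t,x) = ∫_ℝ p_{V(T)−V(t)}(x−y) g(y) dy for 0 ≤ t < T and x ∈ ℝ. Then u is once continuously differentiable in t and twice continuously differentiable in x on (0,T) × ℝ, it satisfies the backward heat-type equation ∂u/∂t(t,x) + (1/2)·V′(t)·∂²u/∂x²(t,x) = 0 for all (t,x) ∈ (0,T) × ℝ, and for every x ∈ ℝ, u(t,x) → g(x) as t → T⁻. -/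
/-!
For `0 < v` with `2λv < 1`, the Gaussian convolution `w(v, x) = ∫ p_v(x - y) g(y) dy` solves the
forward heat equation `∂ᵥ w = ½ ∂ₓ² w`, because the kernel itself does (`∂ᵥ p_v = ½ p_v''`) and
differentiation under the integral is justified: near each such `(v, x)`, the kernel and its
`x`-derivatives times `g` are all dominated by a single `C (1 + y²) exp(-b y²)`, since completing
the square lets the Gaussian decay of `p_v` beat the growth `exp(λ y²)` of `g`. Then
`u(t, x) = w(V(T) - V(t), x)`, and the chain rule produces the factor `-V'(t)` of the backward
equation. As `v → 0⁺`, the substitution `y = x - √v w` turns `w(v, x)` into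
`∫ p_1(w) g(x - √v w) dw`, which tends to `g(x)` by dominated convergence.
-/

open MeasureTheory Set Filter

/-- The centered Gaussian heat kernel of variance `v`. -/
noncomputable def heatKernel (v x : ℝ) : ℝ :=
  (Real.sqrt (2 * Real.pi * v))⁻¹ * Real.exp (-(x ^ 2) / (2 * v))

open Real Topology Function

lemma heatKernel_nonneg (v z : ℝ) : 0 ≤ heatKernel v z := by
  unfold heatKernel; positivity

lemma continuousAt_heatKernel {v : ℝ} (hv : 0 < v) (z : ℝ) :
    ContinuousAt (uncurry heatKernel) (v, z) := by
  unfold heatKernel uncurry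
  fun_prop (disch := positivity)

lemma heatKernel_le_of_mem_Icc {v₁ v₂ v : ℝ} (hv₁ : 0 < v₁) (hv : v ∈ Icc v₁ v₂) (z : ℝ) :
    heatKernel v z ≤ (√(2 * π * v₁))⁻¹ * exp (-(z ^ 2) / (2 * v₂)) := by
  have h0 : 0 < v := hv₁.trans_le hv.1
  unfold heatKernel
  refine mul_le_mul ?_ (exp_le_exp.2 ?_) (exp_pos _).le (by positivity)
  · gcongr; exact hv.1
  · rw [neg_div, neg_div, neg_le_neg_iff]
    exact div_le_div_of_nonneg_left (sq_nonneg z) (by positivity) (by linarith [hv.2])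

noncomputable def heatKernelDeriv (v z : ℝ) : ℝ := -z / v * heatKernel v z

noncomputable def heatKernelDeriv2 (v z : ℝ) : ℝ := (z ^ 2 / v ^ 2 - 1 / v) * heatKernel v z

lemma hasDerivAt_heatKernel (v z : ℝ) : HasDerivAt (heatKernel v) (heatKernelDeriv v z) z := by
  have h : HasDerivAt (fun z => -(z ^ 2) / (2 * v)) _ z := (hasDerivAt_pow 2 z).neg.div_const _
  exact (h.exp.const_mul _).congr_deriv (by rw [heatKernelDeriv, heatKernel]; push_cast; ring)

lemma hasDerivAt_heatKernelDeriv (v z : ℝ) :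
    HasDerivAt (heatKernelDeriv v) (heatKernelDeriv2 v z) z := by
  have h : HasDerivAt (fun z => -z / v) _ z := (hasDerivAt_id z).neg.div_const v
  exact (h.mul (hasDerivAt_heatKernel v z)).congr_deriv
    (by rw [heatKernelDeriv2, heatKernelDeriv]; ring)

/-- The heat equation `∂ᵥ p = ½ ∂²p`. -/
lemma hasDerivAt_heatKernel_variance {v : ℝ} (hv : 0 < v) (z : ℝ) :
    HasDerivAt (fun v => heatKernel v z) (2⁻¹ * heatKernelDeriv2 v z) v := by
  have hsq : √(2 * π * v) ^ 2 = 2 * π * v := sq_sqrt (by positivity)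
  have hs : HasDerivAt (fun v => (√(2 * π * v))⁻¹) _ v :=
    (((hasDerivAt_id v).const_mul (2 * π)).sqrt (by positivity)).inv (by positivity)
  have he : HasDerivAt (fun v => -(z ^ 2) / (2 * v)) _ v :=
    ((hasDerivAt_id v).const_mul 2).inv (by positivity) |>.const_mul (-(z ^ 2))
  exact (hs.mul he.exp).congr_deriv (by
    simp only [heatKernelDeriv2, heatKernel, id, hsq]; field_simp; ring)

/-- Completing the square, with `λ = (2v)⁻¹ - a`. -/
lemma neg_sq_div_add_le {a v x y R : ℝ} (ha : 0 < a) (hv : 0 < v) (hx : |x| ≤ R) :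
    -((x - y) ^ 2) / (2 * v) + ((2 * v)⁻¹ - a) * y ^ 2
      ≤ R ^ 2 / (2 * a * v ^ 2) - a / 2 * y ^ 2 := by
  have hsq : 0 ≤ (a * y - x / v) ^ 2 / (2 * a) := by positivity
  have hxR : x ^ 2 ≤ R ^ 2 := sq_le_sq' (abs_le.1 hx).1 (abs_le.1 hx).2
  have hmon : x ^ 2 / (2 * a * v ^ 2) ≤ R ^ 2 / (2 * a * v ^ 2) := by gcongr
  have hxv : 0 ≤ x ^ 2 / (2 * v) := by positivity
  have key : -((x - y) ^ 2) / (2 * v) + ((2 * v)⁻¹ - a) * y ^ 2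
      = x ^ 2 / (2 * a * v ^ 2) - a / 2 * y ^ 2 - (a * y - x / v) ^ 2 / (2 * a)
        - x ^ 2 / (2 * v) := by
    field_simp; ring
  linarith

lemma one_add_sq_sub_le {x y R : ℝ} (hx : |x| ≤ R) :
    1 + (x - y) ^ 2 ≤ 2 * (1 + R ^ 2) * (1 + y ^ 2) := by
  have hxR : x ^ 2 ≤ R ^ 2 := sq_le_sq' (abs_le.1 hx).1 (abs_le.1 hx).2
  nlinarith [sq_nonneg (x + y), sq_nonneg R, sq_nonneg y, mul_nonneg (sq_nonneg R) (sq_nonneg y)]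

lemma integrable_one_add_sq_mul_exp_neg_mul_sq {b : ℝ} (hb : 0 < b) :
    Integrable fun y : ℝ => (1 + y ^ 2) * exp (-b * y ^ 2) := by
  have h2 : Integrable fun y : ℝ => y ^ 2 * exp (-b * y ^ 2) := by
    simpa using integrable_rpow_mul_exp_neg_mul_sq hb (s := 2) (by norm_num)
  exact ((integrable_exp_neg_mul_sq hb).add h2).congr (ae_of_all _ fun y => by simp only [neg_mul, Pi.add_apply]; ring)

lemma exists_integrable_heatKernel_bound {v₁ v₂ lam : ℝ} (hv₁ : 0 < v₁)
    (hlam : lam < (2 * v₂)⁻¹) (R : ℝ) :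
    ∃ B : ℝ → ℝ, Integrable B ∧ ∀ v ∈ Icc v₁ v₂, ∀ x, |x| ≤ R → ∀ y,
      (1 + (x - y) ^ 2) * heatKernel v (x - y) * exp (lam * y ^ 2) ≤ B y := by
  set a := (2 * v₂)⁻¹ - lam
  have ha : 0 < a := sub_pos.2 hlam
  set C := 2 * (1 + R ^ 2) * (√(2 * π * v₁))⁻¹
  refine ⟨fun y => C * (exp (R ^ 2 / (2 * a * v₂ ^ 2)) * ((1 + y ^ 2) * exp (-(a / 2) * y ^ 2))),
    ((integrable_one_add_sq_mul_exp_neg_mul_sq (by positivity)).const_mul _).const_mul _,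
    fun v hv x hx y => ?_⟩
  have hv₂ : 0 < v₂ := hv₁.trans_le (hv.1.trans hv.2)
  have hexp : -((x - y) ^ 2) / (2 * v₂) + lam * y ^ 2
      ≤ R ^ 2 / (2 * a * v₂ ^ 2) + -(a / 2) * y ^ 2 := by
    have := neg_sq_div_add_le (y := y) ha hv₂ hx
    rw [show (2 * v₂)⁻¹ - a = lam by ring] at this
    linarith
  calc (1 + (x - y) ^ 2) * heatKernel v (x - y) * exp (lam * y ^ 2)
      ≤ 2 * (1 + R ^ 2) * (1 + y ^ 2) *
          ((√(2 * π * v₁))⁻¹ * exp (-((x - y) ^ 2) / (2 * v₂))) * exp (lam * y ^ 2) := by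
        gcongr
        · exact heatKernel_nonneg _ _
        · exact one_add_sq_sub_le hx
        · exact heatKernel_le_of_mem_Icc hv₁ hv _
    _ = C * ((1 + y ^ 2) * exp (-((x - y) ^ 2) / (2 * v₂) + lam * y ^ 2)) := by
        rw [exp_add]; ring
    _ ≤ C * ((1 + y ^ 2) * exp (R ^ 2 / (2 * a * v₂ ^ 2) + -(a / 2) * y ^ 2)) := by gcongr
    _ = _ := by rw [exp_add]; ring

structure IsHeatDominated (k : ℝ → ℝ → ℝ) : Prop where
  continuousAt : ∀ v > 0, ∀ z, ContinuousAt (uncurry k) (v, z)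
  le : ∀ v₁ > 0, ∃ K, ∀ v ≥ v₁, ∀ z, |k v z| ≤ K * ((1 + z ^ 2) * heatKernel v z)

noncomputable def kernelConv (k : ℝ → ℝ → ℝ) (g : ℝ → ℝ) (v x : ℝ) : ℝ :=
  ∫ y, k v (x - y) * g y

namespace IsHeatDominated

variable {k k' : ℝ → ℝ → ℝ} {g : ℝ → ℝ} {c lam : ℝ}

lemma const_mul (hk : IsHeatDominated k) (a : ℝ) : IsHeatDominated fun v z => a * k v z where
  continuousAt v hv z := continuousAt_const.mul (hk.continuousAt v hv z)
  le v₁ hv₁ := by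
    obtain ⟨K, hK⟩ := hk.le v₁ hv₁
    refine ⟨|a| * K, fun v hv z => ?_⟩
    rw [abs_mul, mul_assoc]
    exact mul_le_mul_of_nonneg_left (hK v hv z) (abs_nonneg a)

lemma continuous (hk : IsHeatDominated k) {v : ℝ} (hv : 0 < v) : Continuous (k v) :=
  continuous_iff_continuousAt.2 fun z =>
    (hk.continuousAt v hv z).comp (continuousAt_const.prodMk continuousAt_id)

lemma aestronglyMeasurable (hk : IsHeatDominated k) (hg : Continuous g) {v : ℝ} (hv : 0 < v)
    (x : ℝ) : AEStronglyMeasurable fun y => k v (x - y) * g y :=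
  ((hk.continuous hv).comp (continuous_sub_left x) |>.mul hg).aestronglyMeasurable

lemma exists_integrable_bound (hk : IsHeatDominated k)
    (hgrow : ∀ y, |g y| ≤ c * exp (lam * y ^ 2)) {v₀ : ℝ} (hv₀ : 0 < v₀)
    (hlam : lam < (2 * v₀)⁻¹) (x₀ : ℝ) :
    ∃ B : ℝ → ℝ, Integrable B ∧ ∀ᶠ q : ℝ × ℝ in 𝓝 (v₀, x₀), ∀ y, ‖k q.1 (q.2 - y) * g y‖ ≤ B y := by
  have hcont : ContinuousAt (fun v : ℝ => (2 * v)⁻¹) v₀ :=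
    (continuousAt_const.mul continuousAt_id).inv₀ (mul_ne_zero two_ne_zero hv₀.ne')
  obtain ⟨v₂, hv₂lam, hv₀₂⟩ : ∃ v₂, lam < (2 * v₂)⁻¹ ∧ v₀ < v₂ :=
    ((continuousAt_const.eventually_lt hcont hlam).filter_mono (nhdsWithin_le_nhds (s := Ioi v₀))
      |>.and self_mem_nhdsWithin).exists
  obtain ⟨K, hK⟩ := hk.le (v₀ / 2) (by positivity)
  obtain ⟨B, hB, hkB⟩ := exists_integrable_heatKernel_bound (half_pos hv₀) hv₂lam (|x₀| + 1)
  refine ⟨fun y => |K| * |c| * B y, hB.const_mul _, ?_⟩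
  have hv : ∀ᶠ q : ℝ × ℝ in 𝓝 (v₀, x₀), q.1 ∈ Icc (v₀ / 2) v₂ :=
    continuousAt_fst.eventually (Icc_mem_nhds (half_lt_self hv₀) hv₀₂)
  have hx : ∀ᶠ q : ℝ × ℝ in 𝓝 (v₀, x₀), |q.2| ≤ |x₀| + 1 :=
    (continuous_abs.continuousAt.comp continuousAt_snd).eventually
      (eventually_le_nhds (lt_add_one _))
  filter_upwards [hv, hx] with q hqv hqx y
  have hkq : |k q.1 (q.2 - y)| ≤ |K| * ((1 + (q.2 - y) ^ 2) * heatKernel q.1 (q.2 - y)) :=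
    (hK q.1 hqv.1 _).trans (mul_le_mul_of_nonneg_right (le_abs_self K)
      (mul_nonneg (by positivity) (heatKernel_nonneg _ _)))
  have hgy : |g y| ≤ |c| * exp (lam * y ^ 2) :=
    (hgrow y).trans (mul_le_mul_of_nonneg_right (le_abs_self c) (exp_pos _).le)
  calc ‖k q.1 (q.2 - y) * g y‖ = |k q.1 (q.2 - y)| * |g y| := by
        rw [norm_mul, Real.norm_eq_abs, Real.norm_eq_abs]
    _ ≤ (|K| * ((1 + (q.2 - y) ^ 2) * heatKernel q.1 (q.2 - y))) * (|c| * exp (lam * y ^ 2)) :=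
        mul_le_mul hkq hgy (abs_nonneg _) ((abs_nonneg _).trans hkq)
    _ = |K| * |c| * ((1 + (q.2 - y) ^ 2) * heatKernel q.1 (q.2 - y) * exp (lam * y ^ 2)) := by ring
    _ ≤ |K| * |c| * B y := by gcongr; exact hkB q.1 hqv q.2 hqx y

variable (hg : Continuous g) (hgrow : ∀ y, |g y| ≤ c * exp (lam * y ^ 2))
include hg hgrow

lemma integrable (hk : IsHeatDominated k) {v : ℝ} (hv : 0 < v) (hlam : lam < (2 * v)⁻¹) (x : ℝ) :
    Integrable fun y => k v (x - y) * g y := by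
  obtain ⟨B, hB, hbound⟩ := hk.exists_integrable_bound hgrow hv hlam x
  exact hB.mono' (hk.aestronglyMeasurable hg hv x) (ae_of_all _ hbound.self_of_nhds)

lemma continuousAt_kernelConv (hk : IsHeatDominated k) {v : ℝ} (hv : 0 < v)
    (hlam : lam < (2 * v)⁻¹) (x : ℝ) : ContinuousAt (uncurry (kernelConv k g)) (v, x) := by
  obtain ⟨B, hB, hbound⟩ := hk.exists_integrable_bound hgrow hv hlam x
  refine continuousAt_of_dominated ?_ (hbound.mono fun q hq => ae_of_all _ hq) hB
    (ae_of_all _ fun y => ?_)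
  · filter_upwards [continuousAt_fst.eventually (lt_mem_nhds hv)] with q hq
    exact hk.aestronglyMeasurable hg hq q.2
  · exact (ContinuousAt.comp (x := (v, x)) (hk.continuousAt v hv (x - y))
      (f := fun q : ℝ × ℝ => (q.1, q.2 - y)) (by fun_prop)).mul continuousAt_const

lemma hasDerivAt_kernelConv_right (hk : IsHeatDominated k) (hk' : IsHeatDominated k')
    (hderiv : ∀ v > 0, ∀ z, HasDerivAt (k v) (k' v z) z) {v : ℝ} (hv : 0 < v)
    (hlam : lam < (2 * v)⁻¹) (x : ℝ) :
    HasDerivAt (kernelConv k g v) (kernelConv k' g v x) x := by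
  obtain ⟨B, hB, hbound⟩ := hk'.exists_integrable_bound hgrow hv hlam x
  obtain ⟨s, hs, hsB⟩ := ((continuousAt_const.prodMk continuousAt_id).eventually hbound).exists_mem
  exact (hasDerivAt_integral_of_dominated_loc_of_deriv_le hs
    (Eventually.of_forall fun x => hk.aestronglyMeasurable hg hv x)
    (hk.integrable hg hgrow hv hlam x)
    (hk'.aestronglyMeasurable hg hv x) (ae_of_all _ fun y x hx => hsB x hx y) hB
    (ae_of_all _ fun y x _ => (hderiv v hv _).comp_sub_const x y |>.mul_const (g y))).2

lemma hasDerivAt_kernelConv_left (hk : IsHeatDominated k) (hk' : IsHeatDominated k')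
    (hderiv : ∀ v > 0, ∀ z, HasDerivAt (fun v => k v z) (k' v z) v) {v : ℝ} (hv : 0 < v)
    (hlam : lam < (2 * v)⁻¹) (x : ℝ) :
    HasDerivAt (fun v => kernelConv k g v x) (kernelConv k' g v x) v := by
  obtain ⟨B, hB, hbound⟩ := hk'.exists_integrable_bound hgrow hv hlam x
  obtain ⟨s, hs, hsB⟩ := (((continuousAt_id.prodMk continuousAt_const).eventually hbound).and
    (lt_mem_nhds hv)).exists_mem
  exact (hasDerivAt_integral_of_dominated_loc_of_deriv_le hs
    ((lt_mem_nhds hv).mono fun w hw => hk.aestronglyMeasurable hg hw x)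
    (hk.integrable hg hgrow hv hlam x)
    (hk'.aestronglyMeasurable hg hv x) (ae_of_all _ fun y w hw => (hsB w hw).1 y) hB
    (ae_of_all _ fun y w hw => (hderiv w (hsB w hw).2 _).mul_const (g y))).2

end IsHeatDominated

lemma kernelConv_const_mul (k : ℝ → ℝ → ℝ) (g : ℝ → ℝ) (a v x : ℝ) :
    kernelConv (fun v z => a * k v z) g v x = a * kernelConv k g v x := by
  simp only [kernelConv, mul_assoc, integral_const_mul]

lemma IsHeatDominated.mul_heatKernel {P : ℝ → ℝ → ℝ}
    (hP : ∀ v > 0, ∀ z, ContinuousAt (uncurry P) (v, z))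
    (hPle : ∀ v₁ > 0, ∃ K, ∀ v ≥ v₁, ∀ z, |P v z| ≤ K * (1 + z ^ 2)) :
    IsHeatDominated fun v z => P v z * heatKernel v z where
  continuousAt v hv z := (hP v hv z).mul (continuousAt_heatKernel hv z)
  le v₁ hv₁ := by
    obtain ⟨K, hK⟩ := hPle v₁ hv₁
    refine ⟨K, fun v hv z => ?_⟩
    rw [abs_mul, abs_of_nonneg (heatKernel_nonneg v z), ← mul_assoc]
    exact mul_le_mul_of_nonneg_right (hK v hv z) (heatKernel_nonneg v z)

lemma isHeatDominated_heatKernel : IsHeatDominated heatKernel := by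
  simpa using IsHeatDominated.mul_heatKernel (P := fun _ _ => 1) (fun _ _ _ => continuousAt_const)
    fun _ _ => ⟨1, fun _ _ z => by rw [abs_one, one_mul]; nlinarith [sq_nonneg z]⟩

lemma isHeatDominated_heatKernelDeriv : IsHeatDominated heatKernelDeriv := by
  unfold heatKernelDeriv
  exact IsHeatDominated.mul_heatKernel (P := fun v z => -z / v)
    (fun v hv z => by unfold uncurry; fun_prop (disch := positivity))
    fun v₁ hv₁ => ⟨1 / v₁, fun v hv z => by
      have habs : |z| ≤ 1 + z ^ 2 := by nlinarith [sq_abs z, sq_nonneg (|z| - 1)]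
      calc |-z / v| = |z| / v := by rw [abs_div, abs_neg, abs_of_pos (hv₁.trans_le hv)]
        _ ≤ (1 + z ^ 2) / v₁ := div_le_div₀ (by positivity) habs hv₁ hv
        _ = 1 / v₁ * (1 + z ^ 2) := by ring⟩

lemma isHeatDominated_heatKernelDeriv2 : IsHeatDominated heatKernelDeriv2 := by
  unfold heatKernelDeriv2
  exact IsHeatDominated.mul_heatKernel (P := fun v z => z ^ 2 / v ^ 2 - 1 / v)
    (fun v hv z => by unfold uncurry; fun_prop (disch := positivity))
    fun v₁ hv₁ => ⟨1 / v₁ ^ 2 + 1 / v₁, fun v hv z => by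
      have h0 : 0 < v := hv₁.trans_le hv
      calc |z ^ 2 / v ^ 2 - 1 / v| ≤ z ^ 2 / v ^ 2 + 1 / v := by
            have : 0 ≤ z ^ 2 / v ^ 2 := by positivity
            have : 0 ≤ 1 / v := by positivity
            exact abs_sub_le_iff.2 ⟨by linarith, by linarith⟩
        _ ≤ z ^ 2 / v₁ ^ 2 + 1 / v₁ := by gcongr
        _ ≤ z ^ 2 / v₁ ^ 2 + 1 / v₁ + (1 / v₁ ^ 2 + z ^ 2 / v₁) :=
            le_add_of_nonneg_right (by positivity)
        _ = (1 / v₁ ^ 2 + 1 / v₁) * (1 + z ^ 2) := by ring⟩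

lemma contDiff_two_of_hasDerivAt {f f₁ f₂ : ℝ → ℝ} (h₁ : ∀ x, HasDerivAt f (f₁ x) x)
    (h₂ : ∀ x, HasDerivAt f₁ (f₂ x) x) (hf₂ : Continuous f₂) : ContDiff ℝ 2 f := by
  have hd₁ : deriv f = f₁ := funext fun x => (h₁ x).deriv
  have hd₂ : deriv f₁ = f₂ := funext fun x => (h₂ x).deriv
  rw [show (2 : WithTop ℕ∞) = 1 + 1 from rfl, contDiff_succ_iff_deriv, hd₁, contDiff_one_iff_deriv,
    hd₂]
  exact ⟨fun x => (h₁ x).differentiableAt, by simp, fun x => (h₂ x).differentiableAt, hf₂⟩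

lemma iteratedDeriv_two_of_hasDerivAt {f f₁ f₂ : ℝ → ℝ} (h₁ : ∀ x, HasDerivAt f (f₁ x) x)
    (h₂ : ∀ x, HasDerivAt f₁ (f₂ x) x) : iteratedDeriv 2 f = f₂ := by
  rw [iteratedDeriv_succ, iteratedDeriv_one, funext fun x => (h₁ x).deriv,
    funext fun x => (h₂ x).deriv]

section HeatConv

variable {g : ℝ → ℝ} {c lam v : ℝ} (hg : Continuous g) (hgrow : ∀ y, |g y| ≤ c * exp (lam * y ^ 2))
include hg hgrow

lemma hasDerivAt_kernelConv_heatKernel_variance (hv : 0 < v) (hlam : lam < (2 * v)⁻¹) (x : ℝ) :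
    HasDerivAt (fun v => kernelConv heatKernel g v x)
      (2⁻¹ * kernelConv heatKernelDeriv2 g v x) v := by
  rw [← kernelConv_const_mul]
  exact isHeatDominated_heatKernel.hasDerivAt_kernelConv_left hg hgrow
    (isHeatDominated_heatKernelDeriv2.const_mul _)
    (fun _ hv z => hasDerivAt_heatKernel_variance hv z) hv hlam x

lemma continuousAt_kernelConv_heatKernelDeriv2 (hv : 0 < v) (hlam : lam < (2 * v)⁻¹) (x : ℝ) :
    ContinuousAt (uncurry (kernelConv heatKernelDeriv2 g)) (v, x) :=
  isHeatDominated_heatKernelDeriv2.continuousAt_kernelConv hg hgrow hv hlam x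

lemma contDiff_two_kernelConv_heatKernel (hv : 0 < v) (hlam : lam < (2 * v)⁻¹) :
    ContDiff ℝ 2 (kernelConv heatKernel g v) ∧
      iteratedDeriv 2 (kernelConv heatKernel g v) = kernelConv heatKernelDeriv2 g v := by
  have h₁ := isHeatDominated_heatKernel.hasDerivAt_kernelConv_right hg hgrow
    isHeatDominated_heatKernelDeriv (fun v _ => hasDerivAt_heatKernel v) hv hlam
  have h₂ := isHeatDominated_heatKernelDeriv.hasDerivAt_kernelConv_right hg hgrow
    isHeatDominated_heatKernelDeriv2 (fun v _ => hasDerivAt_heatKernelDeriv v) hv hlam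
  have hc : Continuous (kernelConv heatKernelDeriv2 g v) := continuous_iff_continuousAt.2 fun x =>
    (continuousAt_kernelConv_heatKernelDeriv2 hg hgrow hv hlam x).comp
      (continuousAt_const.prodMk continuousAt_id)
  exact ⟨contDiff_two_of_hasDerivAt h₁ h₂ hc, iteratedDeriv_two_of_hasDerivAt h₁ h₂⟩

end HeatConv

lemma integral_heatKernel_one : ∫ z, heatKernel 1 z = 1 := by
  have h : ∀ z : ℝ, -(z ^ 2) / (2 * 1) = -(1 / 2) * z ^ 2 := fun z => by ring
  simp only [heatKernel, integral_const_mul, h, integral_gaussian]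
  rw [show π / (1 / 2) = 2 * π * 1 by ring]
  exact inv_mul_cancel₀ (by positivity)

lemma sqrt_mul_heatKernel {v : ℝ} (hv : 0 < v) (w : ℝ) :
    √v * heatKernel v (√v * w) = heatKernel 1 w := by
  unfold heatKernel
  rw [mul_pow, sq_sqrt hv.le, show 2 * π * v = 2 * π * 1 * v by ring, sqrt_mul (by positivity)]
  field_simp

lemma kernelConv_heatKernel_eq {v : ℝ} (hv : 0 < v) (g : ℝ → ℝ) (x : ℝ) :
    kernelConv heatKernel g v x = ∫ w, heatKernel 1 w * g (x - √v * w) := by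
  have hs : 0 < √v := sqrt_pos.2 hv
  calc kernelConv heatKernel g v x = ∫ z, heatKernel v z * g (x - z) := by
        simpa only [kernelConv, sub_sub_cancel] using
          integral_sub_left_eq_self (fun z => heatKernel v z * g (x - z)) volume x
    _ = √v * ∫ w, heatKernel v (√v * w) * g (x - √v * w) := by
        rw [Measure.integral_comp_mul_left (fun z => heatKernel v z * g (x - z)), smul_eq_mul,
          abs_of_pos (inv_pos.2 hs), ← mul_assoc, mul_inv_cancel₀ hs.ne', one_mul]
    _ = _ := by
        rw [← integral_const_mul]
        simp only [← mul_assoc, sqrt_mul_heatKernel hv]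

lemma tendsto_kernelConv_heatKernel_zero {g : ℝ → ℝ} {c lam : ℝ} (hg : Continuous g)
    (hgrow : ∀ y, |g y| ≤ c * exp (lam * y ^ 2)) (x : ℝ) :
    Tendsto (fun v => kernelConv heatKernel g v x) (𝓝[>] 0) (𝓝 (g x)) := by
  have hc : 0 ≤ c := (mul_nonneg_iff_of_pos_right (exp_pos _)).1 ((abs_nonneg _).trans (hgrow 0))
  have hgx : g x = ∫ w, heatKernel 1 w * g x := by
    rw [integral_mul_const, integral_heatKernel_one, one_mul]
  rw [hgx, tendsto_congr' (f₂ := fun v => ∫ w, heatKernel 1 w * g (x - √v * w))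
    (eventually_nhdsWithin_of_forall (s := Ioi 0) fun v hv => kernelConv_heatKernel_eq hv g x)]
  set δ := (8 * (|lam| + 1))⁻¹
  refine tendsto_integral_filter_of_dominated_convergence
    (fun w => (√(2 * π * 1))⁻¹ * c * exp (2 * |lam| * x ^ 2) * exp (-(1 / 4) * w ^ 2))
    (Eventually.of_forall fun v => ((isHeatDominated_heatKernel.continuous one_pos).mul
      (hg.comp (by fun_prop))).aestronglyMeasurable) ?_
    ((integrable_exp_neg_mul_sq (by norm_num)).const_mul _)
    (ae_of_all _ fun w => tendsto_const_nhds.mul ((hg.tendsto x).comp ?_))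
  · filter_upwards [Ioc_mem_nhdsGT (by positivity : (0 : ℝ) < δ)] with v hv
    refine ae_of_all _ fun w => ?_
    have hexp : -(w ^ 2) / (2 * 1) + lam * (x - √v * w) ^ 2
        ≤ 2 * |lam| * x ^ 2 + -(1 / 4) * w ^ 2 := by
      have h1 : (x - √v * w) ^ 2 ≤ 2 * x ^ 2 + 2 * (v * w ^ 2) := by
        nlinarith [sq_nonneg (x + √v * w), mul_pow (√v) w 2, sq_sqrt hv.1.le]
      have h2 : lam * (x - √v * w) ^ 2 ≤ |lam| * (2 * x ^ 2 + 2 * (v * w ^ 2)) :=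
        (mul_le_mul_of_nonneg_right (le_abs_self lam) (sq_nonneg _)).trans
          (mul_le_mul_of_nonneg_left h1 (abs_nonneg lam))
      have h3 : 8 * (|lam| + 1) * v ≤ 1 := by
        have h := mul_le_mul_of_nonneg_left hv.2 (by positivity : 0 ≤ 8 * (|lam| + 1))
        rwa [mul_inv_cancel₀ (by positivity)] at h
      nlinarith [mul_le_mul_of_nonneg_right h3 (sq_nonneg w), mul_nonneg hv.1.le (sq_nonneg w)]
    calc ‖heatKernel 1 w * g (x - √v * w)‖
        ≤ heatKernel 1 w * (c * exp (lam * (x - √v * w) ^ 2)) := by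
          rw [norm_mul, Real.norm_of_nonneg (heatKernel_nonneg 1 w)]
          exact mul_le_mul_of_nonneg_left (hgrow _) (heatKernel_nonneg 1 w)
      _ = (√(2 * π * 1))⁻¹ * c * exp (-(w ^ 2) / (2 * 1) + lam * (x - √v * w) ^ 2) := by
          rw [heatKernel, exp_add]; ring
      _ ≤ (√(2 * π * 1))⁻¹ * c * exp (2 * |lam| * x ^ 2 + -(1 / 4) * w ^ 2) := by gcongr
      _ = _ := by rw [exp_add]; ring
  · have : Tendsto (fun v => x - √v * w) (𝓝 0) (𝓝 x) := by
      simpa using ((continuous_sqrt.tendsto 0).mul_const w).const_sub x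
    exact this.mono_left nhdsWithin_le_nhds

theorem stmt0_general (T : ℝ) (hT : 0 < T)
    (V V' : ℝ → ℝ)
    (hVcont : ContinuousOn V (Icc 0 T))
    (hVmono : StrictMonoOn V (Icc 0 T))
    (hV' : ∀ t ∈ Ioo 0 T, HasDerivAt V (V' t) t)
    (hV'cont : ContinuousOn V' (Ioo 0 T))
    (g : ℝ → ℝ) (hg : Continuous g)
    (c lam : ℝ)
    (hlam : lam < (2 * (V T - V 0))⁻¹)
    (hgrow : ∀ y, |g y| ≤ c * Real.exp (lam * y ^ 2))
    (u : ℝ → ℝ → ℝ)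
    (hu : ∀ t x, u t x = ∫ y, heatKernel (V T - V t) (x - y) * g y) :
    (∀ x : ℝ, ∀ t ∈ Ioo 0 T, DifferentiableAt ℝ (fun s => u s x) t)
    ∧ (∀ x : ℝ, ContinuousOn (fun t => deriv (fun s => u s x) t) (Ioo 0 T))
    ∧ (∀ t ∈ Ioo 0 T, ContDiff ℝ 2 (fun x => u t x))
    ∧ (∀ t ∈ Ioo 0 T, ∀ x : ℝ,
        deriv (fun s => u s x) t
          + (1 / 2) * V' t * iteratedDeriv 2 (fun y => u t y) x = 0)
    ∧ (∀ x : ℝ, Tendsto (fun t => u t x) (nhdsWithin T (Iio T)) (nhds (g x))) := by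
  obtain rfl : u = fun t => kernelConv heatKernel g (V T - V t) := funext fun t => funext (hu t)
  have hvar : ∀ t ∈ Ioo 0 T, 0 < V T - V t ∧ lam < (2 * (V T - V t))⁻¹ := fun t ht => by
    have hVt := hVmono (Ioo_subset_Icc_self ht) (right_mem_Icc.2 hT.le) ht.2
    have hV0 := hVmono (left_mem_Icc.2 hT.le) (Ioo_subset_Icc_self ht) ht.1
    exact ⟨sub_pos.2 hVt, hlam.trans_le (inv_anti₀ (by linarith) (by linarith))⟩
  have hdt : ∀ x, ∀ t ∈ Ioo 0 T, HasDerivAt (fun s => kernelConv heatKernel g (V T - V s) x)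
      (2⁻¹ * kernelConv heatKernelDeriv2 g (V T - V t) x * -V' t) t := fun x t ht =>
    (hasDerivAt_kernelConv_heatKernel_variance hg hgrow (hvar t ht).1 (hvar t ht).2 x).comp
      (h₂ := fun v => kernelConv heatKernel g v x) t ((hV' t ht).const_sub (V T))
  have hxx := fun t (ht : t ∈ Ioo 0 T) =>
    contDiff_two_kernelConv_heatKernel hg hgrow (hvar t ht).1 (hvar t ht).2
  refine ⟨fun x t ht => (hdt x t ht).differentiableAt, fun x => ?_, fun t ht => (hxx t ht).1,
    fun t ht x => ?_, fun x => ?_⟩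
  · refine ContinuousOn.congr (fun t ht => ContinuousAt.continuousWithinAt ?_)
      fun t ht => (hdt x t ht).deriv
    have hVt := (hV' t ht).continuousAt
    exact (continuousAt_const.mul ((continuousAt_kernelConv_heatKernelDeriv2 hg hgrow
      (hvar t ht).1 (hvar t ht).2 x).comp (f := fun s => (V T - V s, x)) (by fun_prop))).mul
      (hV'cont.continuousAt (Ioo_mem_nhds ht.1 ht.2)).neg
  · rw [(hdt x t ht).deriv, (hxx t ht).2]
    ring
  · have hVT : Tendsto V (𝓝[<] T) (𝓝 (V T)) :=
      (hVcont T (right_mem_Icc.2 hT.le)).mono_of_mem_nhdsWithin (Icc_mem_nhdsLT hT)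
    have hvar0 : Tendsto (fun t => V T - V t) (𝓝[<] T) (𝓝[>] 0) :=
      tendsto_nhdsWithin_iff.2 ⟨by simpa using hVT.const_sub (V T),
        eventually_of_mem (Ioo_mem_nhdsLT hT) fun t ht => (hvar t ht).1⟩
    exact (tendsto_kernelConv_heatKernel_zero hg hgrow x).comp hvar0

/-- the linear backward heat-type terminal value problem is solved by
the Gaussian convolution `u(t,x) = ∫ p_{V(T) - V(t)}(x - y) g(y) dy`. -/
theorem stmt0 (T : ℝ) (hT : 0 < T)
    (V V' : ℝ → ℝ)
    (hVcont : ContinuousOn V (Icc 0 T))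
    (hVmono : StrictMonoOn V (Icc 0 T))
    (hV' : ∀ t ∈ Ioo 0 T, HasDerivAt V (V' t) t)
    (hV'cont : ContinuousOn V' (Ioo 0 T))
    (g : ℝ → ℝ) (hg : Continuous g)
    (c lam : ℝ) (hc : 0 < c) (hlam0 : 0 < lam)
    (hlam : lam < (2 * (V T - V 0))⁻¹)
    (hgrow : ∀ y, |g y| ≤ c * Real.exp (lam * y ^ 2))
    (u : ℝ → ℝ → ℝ)
    (hu : ∀ t x, u t x = ∫ y, heatKernel (V T - V t) (x - y) * g y) :
    (∀ x : ℝ, ∀ t ∈ Ioo 0 T, DifferentiableAt ℝ (fun s => u s x) t)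
    ∧ (∀ x : ℝ, ContinuousOn (fun t => deriv (fun s => u s x) t) (Ioo 0 T))
    ∧ (∀ t ∈ Ioo 0 T, ContDiff ℝ 2 (fun x => u t x))
    ∧ (∀ t ∈ Ioo 0 T, ∀ x : ℝ,
        deriv (fun s => u s x) t
          + (1 / 2) * V' t * iteratedDeriv 2 (fun y => u t y) x = 0)
    ∧ (∀ x : ℝ, Tendsto (fun t => u t x) (nhdsWithin T (Iio T)) (nhds (g x))) :=
  stmt0_general T hT V V' hVcont hVmono hV' hV'cont g hg c lam hlam hgrow u hu
end

section
/- Let c > 0, λ > 0, and let h : ℝ → ℝ be a continuous function with |h(y)| ≤ c·exp(λy²) for all y ∈ ℝ. Fix v > 0 with 4λv < 1. Then the function x ↦ (P_v h)(x) = ∫_ℝ p_v(x−y) h(y) dy is twice differentiable on ℝ with second derivative (P_v h)″(x) = ∫_ℝ (∂²p_v/∂x²)(x−y) h(y) dy, and there exists a constant M′ > 0 (depending only on c, λ and v) such that |(P_v h)″(x)| ≤ M′·exp(2λx²) for all x ∈ ℝ. -/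
/-!
Differentiate twice under the integral sign. The kernels `p_v`, `p_v'`, `p_v''` are polynomial
multiples of `p_v`, so each is bounded by `C exp (-b u²)` for any `b < 1 / (2 v)`; since
`4 lam v < 1` we may take `b > 2 lam`. Then `lam y² ≤ 2 lam x² + 2 lam (y - x)²` gives
`|k (x - y) h y| ≤ C c exp (2 lam x²) exp (-(b - 2 lam) (y - x)²)`, an integrable Gaussian in `y`
(locally uniformly in `x`), which is what dominated differentiation needs and which integrates
to the growth bound.
-/

open MeasureTheory Set Filter

open Real

theorem hasDerivAt_heatKernel_s3 (v x : ℝ) :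
    HasDerivAt (heatKernel v) (-(x / v) * heatKernel v x) x := by
  have hexponent : HasDerivAt (fun x : ℝ => -(x ^ 2) / (2 * v)) (-(x / v)) x :=
    ((hasDerivAt_pow 2 x).neg.div_const (2 * v)).congr_deriv (by ring)
  exact (hexponent.exp.const_mul _).congr_deriv (by unfold heatKernel; ring)

theorem hasDerivAt_heatKernel_deriv (v x : ℝ) :
    HasDerivAt (fun u => -(u / v) * heatKernel v u) ((x ^ 2 / v ^ 2 - 1 / v) * heatKernel v x) x :=
  (((hasDerivAt_id' x).div_const v).neg.mul (hasDerivAt_heatKernel_s3 v x)).congr_deriv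
    (by simp only [Pi.neg_apply]; ring)

@[fun_prop]
theorem continuous_heatKernel (v : ℝ) : Continuous (heatKernel v) :=
  continuous_iff_continuousAt.2 fun x => (hasDerivAt_heatKernel_s3 v x).continuousAt

theorem one_add_sq_le_mul_exp {δ : ℝ} (hδ : 0 < δ) (t : ℝ) :
    1 + t ^ 2 ≤ (1 + δ⁻¹) * exp (δ * t ^ 2) := by
  have hexpand : (1 + δ⁻¹) * (1 + δ * t ^ 2) = 1 + t ^ 2 + (δ⁻¹ + δ * t ^ 2) := by
    field_simp
    ring
  have hrest : 0 ≤ δ⁻¹ + δ * t ^ 2 := by positivity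
  calc 1 + t ^ 2 ≤ (1 + δ⁻¹) * (1 + δ * t ^ 2) := by rw [hexpand]; linarith
    _ ≤ (1 + δ⁻¹) * exp (δ * t ^ 2) := by gcongr; linarith [add_one_le_exp (δ * t ^ 2)]

theorem exists_abs_mul_heatKernel_le {v b A : ℝ} (hv : 0 < v) (hb : b < (2 * v)⁻¹) (hA : 0 < A)
    {q : ℝ → ℝ} (hq : ∀ u, |q u| ≤ A * (1 + u ^ 2)) :
    ∃ C > 0, ∀ u, |q u * heatKernel v u| ≤ C * exp (-b * u ^ 2) := by
  have hδ : 0 < (2 * v)⁻¹ - b := sub_pos.2 hb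
  refine ⟨A * (1 + ((2 * v)⁻¹ - b)⁻¹) * (sqrt (2 * π * v))⁻¹, by positivity, fun u => ?_⟩
  have hsplit : exp (-b * u ^ 2) = exp (((2 * v)⁻¹ - b) * u ^ 2) * exp (-(u ^ 2) / (2 * v)) := by
    rw [← exp_add]; congr 1; field_simp; ring
  have hp : 0 ≤ heatKernel v u := by unfold heatKernel; positivity
  calc |q u * heatKernel v u| = |q u| * heatKernel v u := by rw [abs_mul, abs_of_nonneg hp]
    _ ≤ A * ((1 + ((2 * v)⁻¹ - b)⁻¹) * exp (((2 * v)⁻¹ - b) * u ^ 2)) * heatKernel v u := by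
        gcongr
        exact (hq u).trans (by gcongr; exact one_add_sq_le_mul_exp hδ u)
    _ = _ := by rw [hsplit]; unfold heatKernel; ring

theorem abs_le_one_add_sq (u : ℝ) : |u| ≤ 1 + u ^ 2 := by
  nlinarith [sq_abs u, sq_nonneg (|u| - 1)]

section KernelBounds

variable {v b : ℝ}

theorem exists_abs_heatKernel_le (hv : 0 < v) (hb : b < (2 * v)⁻¹) :
    ∃ C, ∀ u, |heatKernel v u| ≤ C * exp (-b * u ^ 2) := by
  obtain ⟨C, -, hC⟩ := exists_abs_mul_heatKernel_le hv hb one_pos (q := fun _ => 1) fun u => by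
    rw [abs_one, one_mul]
    nlinarith [sq_nonneg u]
  exact ⟨C, by simpa only [one_mul] using hC⟩

theorem exists_abs_neg_div_mul_heatKernel_le (hv : 0 < v) (hb : b < (2 * v)⁻¹) :
    ∃ C, ∀ u, |-(u / v) * heatKernel v u| ≤ C * exp (-b * u ^ 2) := by
  obtain ⟨C, -, hC⟩ := exists_abs_mul_heatKernel_le hv hb (inv_pos.2 hv) (q := fun u => -(u / v))
    fun u => by
      rw [abs_neg, abs_div, abs_of_pos hv, div_eq_inv_mul]
      exact mul_le_mul_of_nonneg_left (abs_le_one_add_sq u) (inv_pos.2 hv).le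
  exact ⟨C, hC⟩

theorem exists_abs_sq_div_sub_mul_heatKernel_le (hv : 0 < v) (hb : b < (2 * v)⁻¹) :
    ∃ C > 0, ∀ u, |(u ^ 2 / v ^ 2 - 1 / v) * heatKernel v u| ≤ C * exp (-b * u ^ 2) := by
  refine exists_abs_mul_heatKernel_le hv hb (by positivity : 0 < 1 / v ^ 2 + 1 / v) fun u => ?_
  have hsplit : (1 / v ^ 2 + 1 / v) * (1 + u ^ 2)
      = u ^ 2 / v ^ 2 + 1 / v + (1 / v ^ 2 + u ^ 2 / v) := by
    ring
  refine (abs_sub _ _).trans ?_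
  rw [abs_of_nonneg (by positivity), abs_of_pos (by positivity), hsplit]
  linarith [(by positivity : 0 ≤ 1 / v ^ 2 + u ^ 2 / v)]

end KernelBounds

theorem nonneg_of_forall_abs_le_mul_exp {α : Type*} [Nonempty α] {f g : α → ℝ} {C : ℝ}
    (h : ∀ a, |f a| ≤ C * exp (g a)) : 0 ≤ C :=
  have a : α := Classical.arbitrary α
  nonneg_of_mul_nonneg_left ((abs_nonneg _).trans (h a)) (exp_pos _)

section GaussianConvolution

variable {k h : ℝ → ℝ} {C b c lam : ℝ}

theorem abs_mul_le_of_gaussian (hlam : 0 ≤ lam) (hk : ∀ u, |k u| ≤ C * exp (-b * u ^ 2))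
    (hh : ∀ y, |h y| ≤ c * exp (lam * y ^ 2)) (x y : ℝ) :
    |k (x - y) * h y| ≤ C * c * exp (2 * lam * x ^ 2) * exp (-(b - 2 * lam) * (y - x) ^ 2) := by
  have hC := nonneg_of_forall_abs_le_mul_exp hk
  have hc := nonneg_of_forall_abs_le_mul_exp hh
  have hexponent :
      -b * (x - y) ^ 2 + lam * y ^ 2 ≤ 2 * lam * x ^ 2 + -(b - 2 * lam) * (y - x) ^ 2 := by
    nlinarith [mul_nonneg hlam (sq_nonneg (y - 2 * x))]
  calc |k (x - y) * h y| = |k (x - y)| * |h y| := abs_mul _ _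
    _ ≤ C * exp (-b * (x - y) ^ 2) * (c * exp (lam * y ^ 2)) :=
        mul_le_mul (hk _) (hh y) (abs_nonneg _) (by positivity)
    _ = C * c * exp (-b * (x - y) ^ 2 + lam * y ^ 2) := by rw [exp_add]; ring
    _ ≤ C * c * exp (2 * lam * x ^ 2 + -(b - 2 * lam) * (y - x) ^ 2) := by gcongr
    _ = _ := by rw [exp_add]; ring

theorem integrable_mul_of_gaussian (hlam : 0 ≤ lam) (hb : 2 * lam < b) (hkm : Measurable k)
    (hhm : AEStronglyMeasurable h) (hk : ∀ u, |k u| ≤ C * exp (-b * u ^ 2))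
    (hh : ∀ y, |h y| ≤ c * exp (lam * y ^ 2)) (x : ℝ) :
    Integrable (fun y => k (x - y) * h y) :=
  (((integrable_exp_neg_mul_sq (sub_pos.2 hb)).comp_sub_right x).const_mul _).mono'
    ((hkm.comp (measurable_const.sub measurable_id)).aestronglyMeasurable.mul hhm)
    (ae_of_all _ fun y => abs_mul_le_of_gaussian hlam hk hh x y)

theorem abs_integral_mul_le_of_gaussian (hlam : 0 ≤ lam) (hb : 2 * lam < b)
    (hk : ∀ u, |k u| ≤ C * exp (-b * u ^ 2)) (hh : ∀ y, |h y| ≤ c * exp (lam * y ^ 2)) (x : ℝ) :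
    |∫ y, k (x - y) * h y| ≤ C * c * sqrt (π / (b - 2 * lam)) * exp (2 * lam * x ^ 2) := by
  have hint := ((integrable_exp_neg_mul_sq (sub_pos.2 hb)).comp_sub_right x).const_mul
    (C * c * exp (2 * lam * x ^ 2))
  calc |∫ y, k (x - y) * h y| = ‖∫ y, k (x - y) * h y‖ := (norm_eq_abs _).symm
    _ ≤ ∫ y, C * c * exp (2 * lam * x ^ 2) * exp (-(b - 2 * lam) * (y - x) ^ 2) :=
        norm_integral_le_of_norm_le hint
          (ae_of_all _ fun y => abs_mul_le_of_gaussian hlam hk hh x y)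
    _ = _ := by
        rw [integral_const_mul,
          integral_sub_right_eq_self (fun t => exp (-(b - 2 * lam) * t ^ 2)) x, integral_gaussian]
        ring

/-- Half of the spare decay rate `b - 2 lam` pays for moving the centre from `z` to `x₀`. -/
theorem exists_integrable_bound_of_gaussian (hlam : 0 ≤ lam) (hb : 2 * lam < b)
    (hk : ∀ u, |k u| ≤ C * exp (-b * u ^ 2)) (hh : ∀ y, |h y| ≤ c * exp (lam * y ^ 2)) (x₀ : ℝ) :
    ∃ bound : ℝ → ℝ, Integrable bound ∧
      ∀ z ∈ Metric.ball x₀ 1, ∀ y, |k (z - y) * h y| ≤ bound y := by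
  set β := b - 2 * lam
  have hβ : 0 < β := sub_pos.2 hb
  set K := 2 * lam * (|x₀| + 1) ^ 2 + β
  have hCc : 0 ≤ C * c :=
    mul_nonneg (nonneg_of_forall_abs_le_mul_exp hk) (nonneg_of_forall_abs_le_mul_exp hh)
  refine ⟨fun y => C * c * exp K * exp (-(β / 2) * (y - x₀) ^ 2),
    ((integrable_exp_neg_mul_sq (by positivity)).comp_sub_right x₀).const_mul _,
    fun z hz y => (abs_mul_le_of_gaussian hlam hk hh z y).trans ?_⟩
  have hz1 : |z - x₀| ≤ 1 := (mem_ball_iff_norm.1 hz).le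
  have hzsq : z ^ 2 ≤ (|x₀| + 1) ^ 2 :=
    sq_le_sq' (by linarith [neg_abs_le x₀, abs_le.1 hz1])
      (by linarith [le_abs_self x₀, abs_le.1 hz1])
  have hzx₀ : (z - x₀) ^ 2 ≤ 1 := by nlinarith [sq_abs (z - x₀), abs_nonneg (z - x₀)]
  show _ ≤ C * c * exp K * exp (-(β / 2) * (y - x₀) ^ 2)
  rw [mul_assoc (C * c), mul_assoc (C * c), ← exp_add, ← exp_add]
  refine mul_le_mul_of_nonneg_left (exp_le_exp.2 ?_) hCc
  nlinarith [mul_le_mul_of_nonneg_left hzsq hlam, mul_le_mul_of_nonneg_left hzx₀ hβ.le,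
    mul_nonneg hβ.le (sq_nonneg (y - z - (z - x₀)))]

theorem hasDerivAt_integral_mul_of_gaussian {k' : ℝ → ℝ} {C' : ℝ} (hlam : 0 ≤ lam)
    (hb : 2 * lam < b) (hk : ∀ u, HasDerivAt k (k' u) u) (hk'm : Measurable k')
    (hkb : ∀ u, |k u| ≤ C * exp (-b * u ^ 2)) (hk'b : ∀ u, |k' u| ≤ C' * exp (-b * u ^ 2))
    (hhm : AEStronglyMeasurable h) (hh : ∀ y, |h y| ≤ c * exp (lam * y ^ 2)) (x : ℝ) :
    HasDerivAt (fun z => ∫ y, k (z - y) * h y) (∫ y, k' (x - y) * h y) x := by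
  have hkm : Measurable k :=
    (continuous_iff_continuousAt.2 fun u => (hk u).continuousAt).measurable
  obtain ⟨bound, hbound_int, hbound⟩ := exists_integrable_bound_of_gaussian hlam hb hk'b hh x
  exact (hasDerivAt_integral_of_dominated_loc_of_deriv_le (Metric.ball_mem_nhds x one_pos)
    (Eventually.of_forall fun z => (integrable_mul_of_gaussian hlam hb hkm hhm hkb hh z).1)
    (integrable_mul_of_gaussian hlam hb hkm hhm hkb hh x)
    ((hk'm.comp (measurable_const.sub measurable_id)).aestronglyMeasurable.mul hhm)
    (ae_of_all _ fun y z hz => hbound z hz y) hbound_int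
    (ae_of_all _ fun y z _ => ((hk (z - y)).comp_sub_const z y).mul_const (h y))).2

end GaussianConvolution

/-- the Gaussian convolution is twice differentiable, the second derivative
is obtained by differentiating the kernel twice
(`∂²p_v/∂x²(x) = (x²/v² - 1/v) p_v(x)`), and it satisfies a Gaussian growth bound. -/
theorem stmt3 (c lam v : ℝ) (hc : 0 < c) (hlam : 0 < lam) (hv : 0 < v)
    (hvl : 4 * lam * v < 1)
    (h : ℝ → ℝ) (hcont : Continuous h)
    (hgrow : ∀ y, |h y| ≤ c * Real.exp (lam * y ^ 2)) :
    (∀ x : ℝ, DifferentiableAt ℝ (fun z => ∫ y, heatKernel v (z - y) * h y) x)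
    ∧ (∀ x : ℝ, HasDerivAt (deriv (fun z => ∫ y, heatKernel v (z - y) * h y))
        (∫ y, ((x - y) ^ 2 / v ^ 2 - 1 / v) * heatKernel v (x - y) * h y) x)
    ∧ ∃ M' > 0, ∀ x : ℝ,
        |∫ y, ((x - y) ^ 2 / v ^ 2 - 1 / v) * heatKernel v (x - y) * h y|
          ≤ M' * Real.exp (2 * lam * x ^ 2) := by
  have hgap : 2 * lam < (2 * v)⁻¹ := by
    rw [lt_inv_comm₀ (by positivity) (by positivity)]
    field_simp
    linarith
  obtain ⟨b, hb, hb'⟩ := exists_between hgap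
  obtain ⟨C₀, hk₀⟩ := exists_abs_heatKernel_le hv hb'
  obtain ⟨C₁, hk₁⟩ := exists_abs_neg_div_mul_heatKernel_le hv hb'
  obtain ⟨C₂, hC₂, hk₂⟩ := exists_abs_sq_div_sub_mul_heatKernel_le hv hb'
  have hderiv₁ := hasDerivAt_integral_mul_of_gaussian hlam.le hb (hasDerivAt_heatKernel_s3 v)
    (by fun_prop) hk₀ hk₁ hcont.aestronglyMeasurable hgrow
  have hderiv₂ := hasDerivAt_integral_mul_of_gaussian hlam.le hb (hasDerivAt_heatKernel_deriv v)
    (by fun_prop) hk₁ hk₂ hcont.aestronglyMeasurable hgrow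
  refine ⟨fun x => (hderiv₁ x).differentiableAt, fun x => ?_, C₂ * c * sqrt (π / (b - 2 * lam)),
    by positivity, abs_integral_mul_le_of_gaussian hlam.le hb hk₂ hgrow⟩
  rw [show deriv _ = _ from funext fun x => (hderiv₁ x).deriv]
  exact hderiv₂ x
end

section
/- Let w : ℝ → ℝ be continuous and of polynomial growth, i.e. there exist C > 0 and m ∈ ℕ with |w(y)| ≤ C·(1 + |y|)^m for all y ∈ ℝ. Suppose there exists ε > 0 such that (P_v w)(z) = ∫_ℝ p_v(z−y) w(y) dy = 0 for all z ∈ ℝ and all v ∈ (0, ε). Then w(y) = 0 for all y ∈ ℝ. -/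
open MeasureTheory Set Filter

/-!
After the substitution `y = z - √v u`, `(P_v w)(z)` is the expectation of `w (z - √v X)` for a
standard Gaussian `X`. Polynomial growth of `w` together with the finiteness of all Gaussian
moments gives an integrable dominating function, so by dominated convergence `(P_v w)(z) → w z`
as `v → 0⁺`; the hypothesis says that this limit is `0`.
-/

open ProbabilityTheory Topology

lemma heatKernel_eq_gaussianPDFReal {v : ℝ} (hv : 0 ≤ v) (x : ℝ) :
    heatKernel v x = gaussianPDFReal 0 v.toNNReal x := by
  simp [heatKernel, gaussianPDFReal, Real.coe_toNNReal v hv]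

lemma integral_heatKernel_mul_eq_integral_gaussianReal (w : ℝ → ℝ) (z : ℝ) {v : ℝ}
    (hv : 0 < v) :
    ∫ y, heatKernel v (z - y) * w y = ∫ u, w (z - √v * u) ∂gaussianReal 0 1 := by
  have hsqrt : √v ≠ 0 := (Real.sqrt_pos.2 hv).ne'
  have hmap : (gaussianReal 0 1).map (√v * ·) = gaussianReal 0 v.toNNReal := by
    rw [gaussianReal_map_const_mul, mul_zero, mul_one]
    congr 1
    rw [← NNReal.coe_inj]
    simp [Real.sq_sqrt hv.le, Real.coe_toNNReal v hv.le]
  calc ∫ y, heatKernel v (z - y) * w y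
      = ∫ t, heatKernel v t * w (z - t) := by
        rw [← integral_sub_left_eq_self (fun t => heatKernel v t * w (z - t)) volume z]
        simp only [sub_sub_cancel]
    _ = ∫ t, w (z - t) ∂gaussianReal 0 v.toNNReal := by
        have hv' : v.toNNReal ≠ 0 := by simpa using hv
        rw [integral_gaussianReal_eq_integral_smul hv']
        simp only [heatKernel_eq_gaussianPDFReal hv.le, smul_eq_mul]
    _ = ∫ u, w (z - √v * u) ∂gaussianReal 0 1 := by
        rw [← hmap, (measurableEmbedding_mulLeft₀ hsqrt).integral_map]

lemma integrable_one_add_abs_pow_gaussianReal (μ : ℝ) (v : NNReal) (m : ℕ) :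
    Integrable (fun u : ℝ => (1 + |u|) ^ m) (gaussianReal μ v) := by
  have hid : MemLp id m (gaussianReal μ v) := memLp_id_gaussianReal' _ (ENNReal.natCast_ne_top m)
  refine ((memLp_const (1 : ℝ)).add hid.norm).integrable_norm_pow'.congr (ae_of_all _ fun u => ?_)
  simp [abs_of_nonneg (by positivity : (0:ℝ) ≤ 1 + |u|)]

lemma continuousAt_integral_comp_sub_mul {μ : Measure ℝ} {w : ℝ → ℝ} (hw : Continuous w)
    {C : ℝ} {m : ℕ} (hgrow : ∀ y, |w y| ≤ C * (1 + |y|) ^ m)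
    (hμ : Integrable (fun u => (1 + |u|) ^ m) μ) (z : ℝ) :
    ContinuousAt (fun s => ∫ u, w (z - s * u) ∂μ) 0 := by
  have hbound : ∀ s ∈ Icc (-1 : ℝ) 1, ∀ u,
      ‖w (z - s * u)‖ ≤ C * (1 + |z|) ^ m * (1 + |u|) ^ m := by
    intro s hs u
    have hsu : |s * u| ≤ |u| := by
      rw [abs_mul]; exact mul_le_of_le_one_left (abs_nonneg u) (abs_le.2 hs)
    have hC : 0 ≤ C := nonneg_of_mul_nonneg_left ((abs_nonneg _).trans (hgrow 0)) (by positivity)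
    calc ‖w (z - s * u)‖ ≤ C * (1 + |z - s * u|) ^ m := hgrow _
      _ ≤ C * ((1 + |z|) * (1 + |u|)) ^ m := by
          gcongr
          nlinarith [abs_sub z (s * u), abs_nonneg z, abs_nonneg u]
      _ = C * (1 + |z|) ^ m * (1 + |u|) ^ m := by rw [mul_pow, mul_assoc]
  refine continuousAt_of_dominated
    (Eventually.of_forall fun s => (hw.comp (by fun_prop)).aestronglyMeasurable)
    ?_ (hμ.const_mul (C * (1 + |z|) ^ m))
    (ae_of_all _ fun u => (hw.comp (by fun_prop)).continuousAt)
  filter_upwards [Icc_mem_nhds (by norm_num : (-1 : ℝ) < 0) one_pos] with s hs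
  exact ae_of_all _ (hbound s hs)

lemma tendsto_integral_heatKernel_mul {w : ℝ → ℝ} (hw : Continuous w)
    {C : ℝ} {m : ℕ} (hgrow : ∀ y, |w y| ≤ C * (1 + |y|) ^ m) (z : ℝ) :
    Tendsto (fun v => ∫ y, heatKernel v (z - y) * w y) (𝓝[>] 0) (𝓝 (w z)) := by
  have hcont := continuousAt_integral_comp_sub_mul hw hgrow
    (integrable_one_add_abs_pow_gaussianReal 0 1 m) z
  simp only [ContinuousAt, zero_mul, sub_zero, integral_const, probReal_univ, one_smul] at hcont
  have hsqrt : Tendsto Real.sqrt (𝓝[>] 0) (𝓝 0) := by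
    simpa using (Real.continuous_sqrt.tendsto 0).mono_left nhdsWithin_le_nhds
  refine (hcont.comp hsqrt).congr' ?_
  filter_upwards [self_mem_nhdsWithin] with v hv
  exact (integral_heatKernel_mul_eq_integral_gaussianReal w z hv).symm

theorem stmt8_general (w : ℝ → ℝ) (hw : Continuous w)
    (C : ℝ) (m : ℕ)
    (hgrow : ∀ y, |w y| ≤ C * (1 + |y|) ^ m)
    (ε : ℝ) (hε : 0 < ε)
    (hzero : ∀ z : ℝ, ∀ v ∈ Ioo (0:ℝ) ε,
      ∫ y, heatKernel v (z - y) * w y = 0) :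
    ∀ y : ℝ, w y = 0 := by
  intro z
  have hvanish : (fun v => ∫ y, heatKernel v (z - y) * w y) =ᶠ[𝓝[>] 0] fun _ => 0 := by
    filter_upwards [Ioo_mem_nhdsGT hε] with v hv using hzero z v hv
  exact tendsto_nhds_unique (tendsto_integral_heatKernel_mul hw hgrow z)
    (tendsto_const_nhds.congr' hvanish.symm)

/-- a continuous function of polynomial growth whose Gaussian
convolutions `(P_v w)(z)` vanish for all `z` and all small `v > 0`
vanishes identically. -/
theorem stmt8 (w : ℝ → ℝ) (hw : Continuous w)
    (C : ℝ) (hC : 0 < C) (m : ℕ)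
    (hgrow : ∀ y, |w y| ≤ C * (1 + |y|) ^ m)
    (ε : ℝ) (hε : 0 < ε)
    (hzero : ∀ z : ℝ, ∀ v ∈ Ioo (0:ℝ) ε,
      ∫ y, heatKernel v (z - y) * w y = 0) :
    ∀ y : ℝ, w y = 0 :=
  stmt8_general w hw C m hgrow ε hε hzero
end

section
/- Let T > 0 and let K : [0,T]² → ℝ be a Volterra kernel satisfying (H1) and (H2). Let φ, ψ : [0,T] → ℝ be bounded measurable functions. Define (K_T^*φ)_t = ∫_t^T φ(r)·(∂K/∂r)(r,t) dr and, for r ≠ s, φ₀(r,s) = ∫_0^{min(r,s)} (∂K/∂r)(r,t)·(∂K/∂s)(s,t) dt. Then all the integrals involved converge absolutely and ∫_0^T (K_T^*φ)_t·(K_T^*ψ)_t dt = ∫_0^T ∫_0^T φ₀(r,s)·φ(r)·ψ(s) ds dr. -/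
/-!
Cut `K'` off outside `0 < t < r < T` and read both sides as integrals of
`F(r, s, t) = φ(r) K'(r, t) ψ(s) K'(s, t)` over `(0, T]³`. By (H2), `∫ |K'(r, t)| dr ≲ t^(-β)`,
so by Tonelli `∫ |F| ≲ ∫₀ᵀ t^(-2β) dt < ∞` because `β < 1/2`; Fubini then exchanges the
`t`-integral with the `(r, s)`-integrals, and the inner `t`-integral is `φ₀(r, s) φ(r) ψ(s)`.
For fixed `r < s` the pointwise bound
`|K'(r, t) K'(s, t)| ≲ (s - r)^(α - 1) t^(-2β) (r - t)^(α - 1)` gives the absolute convergence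
of `φ₀(r, s)` itself.
-/

open MeasureTheory Set

theorem integrableOn_rpow_mul_sub_rpow {a b r : ℝ} (ha : -1 < a) (ha₀ : a ≤ 0) (hb : -1 < b)
    (hb₀ : b ≤ 0) : IntegrableOn (fun t => t ^ a * (r - t) ^ b) (Ioo 0 r) := by
  have h_left : IntegrableOn (fun t : ℝ => t ^ a) (Ioo 0 r) :=
    (intervalIntegral.intervalIntegrable_rpow' ha).1.mono_set Ioo_subset_Ioc_self
  have h_right : IntegrableOn (fun t : ℝ => (r - t) ^ b) (Ioo 0 r) := by
    have h := (intervalIntegral.intervalIntegrable_rpow' hb (a := r) (b := 0)).comp_sub_left r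
    simp only [sub_self, sub_zero] at h
    exact h.1.mono_set Ioo_subset_Ioc_self
  -- at every point one of the two factors is at most its value at `r / 2`
  refine ((h_left.const_mul ((r / 2) ^ b)).add (h_right.const_mul ((r / 2) ^ a))).mono'
    (by fun_prop : Measurable fun t : ℝ => t ^ a * (r - t) ^ b).aestronglyMeasurable ?_
  filter_upwards [ae_restrict_mem measurableSet_Ioo] with t ⟨ht₀, htr⟩
  have hta : 0 ≤ t ^ a := Real.rpow_nonneg ht₀.le a
  have htb : 0 ≤ (r - t) ^ b := Real.rpow_nonneg (by linarith) b
  rw [Real.norm_of_nonneg (mul_nonneg hta htb), Pi.add_apply]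
  rcases le_total t (r / 2) with h | h
  · have : (r - t) ^ b ≤ (r / 2) ^ b := Real.rpow_le_rpow_of_nonpos (by linarith) (by linarith) hb₀
    nlinarith [Real.rpow_nonneg (by linarith : (0:ℝ) ≤ r / 2) a]
  · have : t ^ a ≤ (r / 2) ^ a := Real.rpow_le_rpow_of_nonpos (by linarith) h ha₀
    nlinarith [Real.rpow_nonneg (by linarith : (0:ℝ) ≤ r / 2) b]

theorem integral_sub_rpow {t T p : ℝ} (hp : -1 < p) (htT : t ≤ T) :
    ∫ r in Ioo t T, (r - t) ^ p = (T - t) ^ (p + 1) / (p + 1) := by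
  rw [← integral_Ioc_eq_integral_Ioo, ← intervalIntegral.integral_of_le htT,
    intervalIntegral.integral_comp_sub_right (fun u : ℝ => u ^ p), sub_self,
    integral_rpow (Or.inl hp), Real.zero_rpow (by linarith), sub_zero]

theorem ae_restrict_Ioc_mem_Ioo {μ : Measure ℝ} [NullSingletonClass μ] {a b : ℝ} :
    ∀ᵐ t ∂μ.restrict (Ioc a b), t ∈ Ioo a b := by
  rw [Measure.restrict_congr_set Ioo_ae_eq_Ioc.symm]
  exact ae_restrict_mem measurableSet_Ioo

section Fubini

variable {X₁ X₂ Y : Type*} [MeasurableSpace X₁] [MeasurableSpace X₂] [MeasurableSpace Y]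
  {μ₁ : Measure X₁} {μ₂ : Measure X₂} {ν : Measure Y} [SFinite μ₁] [SFinite μ₂] [SFinite ν]
  {f₁ : X₁ → Y → ℝ} {f₂ : X₂ → Y → ℝ}

theorem integrable_mul_of_integral_norm_mul_le {w : Y → ℝ}
    (hf₁ : Measurable (Function.uncurry f₁)) (hf₂ : Measurable (Function.uncurry f₂))
    (hf₁y : ∀ᵐ y ∂ν, Integrable (f₁ · y) μ₁) (hf₂y : ∀ᵐ y ∂ν, Integrable (f₂ · y) μ₂)
    (hw : Integrable w ν) (hfw : ∀ᵐ y ∂ν, (∫ x, ‖f₁ x y‖ ∂μ₁) * (∫ x, ‖f₂ x y‖ ∂μ₂) ≤ w y) :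
    Integrable (fun p : (X₁ × X₂) × Y => f₁ p.1.1 p.2 * f₂ p.1.2 p.2) ((μ₁.prod μ₂).prod ν) := by
  have hF : Measurable fun p : (X₁ × X₂) × Y => f₁ p.1.1 p.2 * f₂ p.1.2 p.2 :=
    (hf₁.comp (measurable_fst.fst.prodMk measurable_snd)).mul
      (hf₂.comp (measurable_fst.snd.prodMk measurable_snd))
  refine (integrable_prod_iff' hF.aestronglyMeasurable).2 ⟨?_, ?_⟩
  · filter_upwards [hf₁y, hf₂y] with y h₁ h₂ using h₁.mul_prod h₂
  · refine hw.mono' (hF.norm.stronglyMeasurable.integral_prod_left').aestronglyMeasurable ?_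
    filter_upwards [hfw] with y hy
    have hsplit : ∫ z, ‖f₁ z.1 y * f₂ z.2 y‖ ∂(μ₁.prod μ₂)
        = (∫ x, ‖f₁ x y‖ ∂μ₁) * ∫ x, ‖f₂ x y‖ ∂μ₂ := by
      simp_rw [norm_mul]
      exact integral_prod_mul (‖f₁ · y‖) (‖f₂ · y‖)
    rwa [hsplit, Real.norm_of_nonneg (by positivity)]

theorem integral_mul_integral_eq_integral_integral
    (hF : Integrable (fun p : (X₁ × X₂) × Y => f₁ p.1.1 p.2 * f₂ p.1.2 p.2)
      ((μ₁.prod μ₂).prod ν)) :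
    ∫ y, (∫ x, f₁ x y ∂μ₁) * (∫ x, f₂ x y ∂μ₂) ∂ν
      = ∫ x₁, ∫ x₂, ∫ y, f₁ x₁ y * f₂ x₂ y ∂ν ∂μ₂ ∂μ₁ := by
  calc ∫ y, (∫ x, f₁ x y ∂μ₁) * (∫ x, f₂ x y ∂μ₂) ∂ν
      = ∫ y, ∫ z, f₁ z.1 y * f₂ z.2 y ∂(μ₁.prod μ₂) ∂ν :=
        integral_congr_ae (ae_of_all _ fun y => (integral_prod_mul (f₁ · y) (f₂ · y)).symm)
    _ = ∫ z, ∫ y, f₁ z.1 y * f₂ z.2 y ∂ν ∂(μ₁.prod μ₂) := (integral_integral_swap hF).symm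
    _ = ∫ x₁, ∫ x₂, ∫ y, f₁ x₁ y * f₂ x₂ y ∂ν ∂μ₂ ∂μ₁ := integral_prod _ hF.integral_prod_left

end Fubini

def volterraDomain (T : ℝ) : Set (ℝ × ℝ) := {p | 0 < p.2 ∧ p.2 < p.1 ∧ p.1 < T}

-- Cutting `k` off outside `volterraDomain T`, the only region where it is assumed continuous,
-- makes it jointly measurable.
noncomputable def truncKernel (T : ℝ) (k : ℝ → ℝ → ℝ) (r t : ℝ) : ℝ :=
  (volterraDomain T).indicator (Function.uncurry k) (r, t)

/-- The adjoint operator `(K_T^* φ)_t`. -/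
noncomputable def volterraAdjoint (T : ℝ) (k : ℝ → ℝ → ℝ) (φ : ℝ → ℝ) (t : ℝ) : ℝ :=
  ∫ r in t..T, φ r * k r t

/-- The kernel `φ₀(r, s)`. -/
noncomputable def volterraGram (k : ℝ → ℝ → ℝ) (r s : ℝ) : ℝ :=
  ∫ t in 0..min r s, k r t * k s t

def VolterraKernelBound (T A α β : ℝ) (k : ℝ → ℝ → ℝ) : Prop :=
  ∀ r t, 0 < t → t < r → r < T → |k r t| ≤ A * t ^ (-β) * (r - t) ^ (α - 1)

theorem volterraKernelBound_of_abs_le {T α β c : ℝ} {k : ℝ → ℝ → ℝ} (hβ : 0 ≤ β) (hc : 0 ≤ c)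
    (hk : ∀ s t, 0 < s → s < t → t < T → |k t s| ≤ c * (t - s) ^ (α - 1) * (t / s) ^ β) :
    VolterraKernelBound T (c * T ^ β) α β k := by
  intro r t ht htr hrT
  calc |k r t| ≤ c * (r - t) ^ (α - 1) * (r / t) ^ β := hk t r ht htr hrT
    _ ≤ c * (r - t) ^ (α - 1) * (T / t) ^ β := by
      gcongr
      exact div_nonneg (by linarith) ht.le
    _ = c * T ^ β * t ^ (-β) * (r - t) ^ (α - 1) := by
      rw [Real.div_rpow (by linarith) ht.le, Real.rpow_neg ht.le]
      ring

namespace truncKernel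

variable {T A α β : ℝ} {k : ℝ → ℝ → ℝ} {r s t : ℝ}

theorem eq_of_lt (ht : 0 < t) (htr : t < r) (hrT : r < T) : truncKernel T k r t = k r t :=
  indicator_of_mem (show (r, t) ∈ volterraDomain T from ⟨ht, htr, hrT⟩) _

theorem eq_zero (h : ¬(0 < t ∧ t < r ∧ r < T)) : truncKernel T k r t = 0 :=
  indicator_of_notMem (show (r, t) ∉ volterraDomain T from h) _

theorem measurable (hk : ContinuousOn (Function.uncurry k) (volterraDomain T)) :
    Measurable (Function.uncurry (truncKernel T k)) := by
  have hopen : IsOpen (volterraDomain T) :=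
    (isOpen_lt continuous_const continuous_snd).inter
      ((isOpen_lt continuous_snd continuous_fst).inter (isOpen_lt continuous_fst continuous_const))
  classical
  have h := hk.measurable_piecewise continuousOn_const hopen.measurableSet (g := 0)
  rwa [piecewise_eq_indicator] at h

theorem abs_le_indicator (hk : VolterraKernelBound T A α β k) (ht : 0 < t) (r : ℝ) :
    |truncKernel T k r t| ≤ (Ioo t T).indicator (fun r => A * t ^ (-β) * (r - t) ^ (α - 1)) r := by
  by_cases hr : r ∈ Ioo t T
  · rw [eq_of_lt ht hr.1 hr.2, indicator_of_mem hr]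
    exact hk r t ht hr.1 hr.2
  · rw [eq_zero fun h => hr ⟨h.2.1, h.2.2⟩, indicator_of_notMem hr, abs_zero]

theorem integrableOn_majorant (hα : 0 < α) (t : ℝ) :
    IntegrableOn (fun r => A * t ^ (-β) * (r - t) ^ (α - 1)) (Ioo t T) := by
  have h := (intervalIntegral.intervalIntegrable_rpow' (by linarith : -1 < α - 1)
    (a := 0) (b := T - t)).comp_sub_right t
  simp only [zero_add, sub_add_cancel] at h
  exact (h.def'.mono_set (Ioo_subset_Ioc_self.trans Ioc_subset_uIoc)).const_mul _

theorem integrable (hα : 0 < α) (hkc : ContinuousOn (Function.uncurry k) (volterraDomain T))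
    (hk : VolterraKernelBound T A α β k) (ht : 0 < t) : Integrable (truncKernel T k · t) :=
  ((integrableOn_majorant hα t).integrable_indicator measurableSet_Ioo).mono'
    ((measurable hkc).comp (measurable_id.prodMk measurable_const)).aestronglyMeasurable
    (ae_of_all _ (abs_le_indicator hk ht))

theorem integral_abs_le (hα : 0 < α) (hA : 0 ≤ A) (hk : VolterraKernelBound T A α β k)
    (ht : 0 < t) (htT : t < T) : ∫ r, |truncKernel T k r t| ≤ A * (T ^ α / α) * t ^ (-β) :=
  calc ∫ r, |truncKernel T k r t|
      ≤ ∫ r, (Ioo t T).indicator (fun r => A * t ^ (-β) * (r - t) ^ (α - 1)) r :=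
        integral_mono_of_nonneg (ae_of_all _ fun _ => abs_nonneg _)
          ((integrableOn_majorant hα t).integrable_indicator measurableSet_Ioo)
          (ae_of_all _ (abs_le_indicator hk ht))
    _ = A * t ^ (-β) * ((T - t) ^ α / α) := by
        rw [integral_indicator measurableSet_Ioo, integral_const_mul,
          integral_sub_rpow (by linarith) htT.le, sub_add_cancel]
    _ ≤ A * t ^ (-β) * (T ^ α / α) := by
        gcongr
        linarith
    _ = A * (T ^ α / α) * t ^ (-β) := by ring

theorem integrable_mul (hα : 0 < α) (hkc : ContinuousOn (Function.uncurry k) (volterraDomain T))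
    (hk : VolterraKernelBound T A α β k) (ht : 0 < t) {χ : ℝ → ℝ} {C : ℝ} (hχ : Measurable χ)
    (hχC : ∀ r, |χ r| ≤ C) : Integrable (fun r => χ r * truncKernel T k r t) :=
  (integrable hα hkc hk ht).bdd_mul hχ.aestronglyMeasurable (ae_of_all _ hχC)

theorem integral_abs_mul_le (hα : 0 < α) (hA : 0 ≤ A)
    (hkc : ContinuousOn (Function.uncurry k) (volterraDomain T))
    (hk : VolterraKernelBound T A α β k) (ht : 0 < t) (htT : t < T) {χ : ℝ → ℝ} {C : ℝ}
    (hχC : ∀ r, |χ r| ≤ C) :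
    ∫ r, |χ r * truncKernel T k r t| ≤ C * (A * (T ^ α / α)) * t ^ (-β) := by
  have hC : 0 ≤ C := (abs_nonneg _).trans (hχC 0)
  calc ∫ r, |χ r * truncKernel T k r t|
      ≤ ∫ r, C * |truncKernel T k r t| :=
        integral_mono_of_nonneg (ae_of_all _ fun _ => abs_nonneg _)
          ((integrable hα hkc hk ht).abs.const_mul C) (ae_of_all _ fun r => by
            simp only [abs_mul]; exact mul_le_mul_of_nonneg_right (hχC r) (abs_nonneg _))
    _ = C * ∫ r, |truncKernel T k r t| := integral_const_mul _ _
    _ ≤ C * (A * (T ^ α / α) * t ^ (-β)) :=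
        mul_le_mul_of_nonneg_left (integral_abs_le hα hA hk ht htT) hC
    _ = C * (A * (T ^ α / α)) * t ^ (-β) := by ring

theorem integrableOn_mul_of_lt (hα₀ : 0 < α) (hα₁ : α ≤ 1) (hβ₀ : 0 ≤ β) (hβ₁ : β < 1 / 2)
    (hA : 0 ≤ A) (hkc : ContinuousOn (Function.uncurry k) (volterraDomain T))
    (hk : VolterraKernelBound T A α β k) (hrs : r < s) (hsT : s < T) :
    IntegrableOn (fun t => truncKernel T k r t * truncKernel T k s t) (Ioo 0 r) := by
  have hmeas := measurable hkc
  refine ((integrableOn_rpow_mul_sub_rpow (by linarith : -1 < -(2 * β)) (by linarith)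
    (by linarith : -1 < α - 1) (by linarith)).const_mul (A ^ 2 * (s - r) ^ (α - 1))).mono'
    ((hmeas.comp (measurable_const.prodMk measurable_id)).mul
      (hmeas.comp (measurable_const.prodMk measurable_id))).aestronglyMeasurable ?_
  filter_upwards [ae_restrict_mem measurableSet_Ioo] with t ⟨ht, htr⟩
  have h₁ : |truncKernel T k r t| ≤ A * t ^ (-β) * (r - t) ^ (α - 1) := by
    rw [eq_of_lt ht htr (hrs.trans hsT)]
    exact hk r t ht htr (hrs.trans hsT)
  have h₂ : |truncKernel T k s t| ≤ A * t ^ (-β) * (s - r) ^ (α - 1) := by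
    rw [eq_of_lt ht (htr.trans hrs) hsT]
    refine (hk s t ht (htr.trans hrs) hsT).trans ?_
    exact mul_le_mul_of_nonneg_left
      (Real.rpow_le_rpow_of_nonpos (by linarith) (by linarith) (by linarith)) (by positivity)
  rw [norm_mul, Real.norm_eq_abs, Real.norm_eq_abs]
  calc |truncKernel T k r t| * |truncKernel T k s t|
      ≤ A * t ^ (-β) * (r - t) ^ (α - 1) * (A * t ^ (-β) * (s - r) ^ (α - 1)) :=
        mul_le_mul h₁ h₂ (abs_nonneg _) ((abs_nonneg _).trans h₁)
    _ = A ^ 2 * (s - r) ^ (α - 1) * (t ^ (-(2 * β)) * (r - t) ^ (α - 1)) := by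
        rw [show -(2 * β) = -β + -β by ring, Real.rpow_add ht]
        ring

theorem integrableOn_mul (hα₀ : 0 < α) (hα₁ : α ≤ 1) (hβ₀ : 0 ≤ β) (hβ₁ : β < 1 / 2)
    (hA : 0 ≤ A) (hkc : ContinuousOn (Function.uncurry k) (volterraDomain T))
    (hk : VolterraKernelBound T A α β k) (hrT : r < T) (hsT : s < T) (hrs : r ≠ s) :
    IntegrableOn (fun t => truncKernel T k r t * truncKernel T k s t) (Ioo 0 (min r s)) := by
  rcases hrs.lt_or_gt with h | h
  · rw [min_eq_left h.le]
    exact integrableOn_mul_of_lt hα₀ hα₁ hβ₀ hβ₁ hA hkc hk h hsT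
  · rw [min_eq_right h.le]
    simp_rw [mul_comm (truncKernel T k r _)]
    exact integrableOn_mul_of_lt hα₀ hα₁ hβ₀ hβ₁ hA hkc hk h hrT

theorem setIntegral_mul_left_eq (χ : ℝ → ℝ) (ht : t ∈ Ioo 0 T) :
    ∫ r in Ioc 0 T, χ r * truncKernel T k r t = volterraAdjoint T k χ t :=
  calc ∫ r in Ioc 0 T, χ r * truncKernel T k r t
      = ∫ r in Ioo t T, χ r * truncKernel T k r t :=
        setIntegral_eq_of_subset_of_forall_sdiff_eq_zero measurableSet_Ioc
          (fun r hr => ⟨ht.1.trans hr.1, hr.2.le⟩)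
          (fun r hr => by rw [eq_zero fun h => hr.2 ⟨h.2.1, h.2.2⟩, mul_zero])
    _ = ∫ r in Ioo t T, χ r * k r t :=
        setIntegral_congr_fun measurableSet_Ioo fun r hr => by
          simp only [eq_of_lt ht.1 hr.1 hr.2]
    _ = volterraAdjoint T k χ t := by
        rw [volterraAdjoint, intervalIntegral.integral_of_le ht.2.le, integral_Ioc_eq_integral_Ioo]

theorem setIntegral_mul_eq (hr : r ∈ Ioo 0 T) (hs : s ∈ Ioo 0 T) :
    ∫ t in Ioc 0 T, truncKernel T k r t * truncKernel T k s t = volterraGram k r s :=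
  calc ∫ t in Ioc 0 T, truncKernel T k r t * truncKernel T k s t
      = ∫ t in Ioo 0 (min r s), truncKernel T k r t * truncKernel T k s t := by
        refine setIntegral_eq_of_subset_of_forall_sdiff_eq_zero measurableSet_Ioc
          (fun t ht => ⟨ht.1, (ht.2.trans_le (min_le_left r s)).le.trans hr.2.le⟩) ?_
        rintro t ⟨⟨ht, -⟩, hnot⟩
        rcases min_le_iff.1 (not_lt.1 fun h => hnot ⟨ht, h⟩) with h | h
        · rw [eq_zero fun h' => h.not_gt h'.2.1, zero_mul]
        · rw [eq_zero (r := s) fun h' => h.not_gt h'.2.1, mul_zero]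
    _ = ∫ t in Ioo 0 (min r s), k r t * k s t :=
        setIntegral_congr_fun measurableSet_Ioo fun t ht => by
          simp only [eq_of_lt ht.1 (lt_min_iff.1 ht.2).1 hr.2,
            eq_of_lt ht.1 (lt_min_iff.1 ht.2).2 hs.2]
    _ = volterraGram k r s := by
        rw [volterraGram, intervalIntegral.integral_of_le (le_min hr.1.le hs.1.le),
          integral_Ioc_eq_integral_Ioo]

theorem ae_integral_mul_integral_eq (φ ψ : ℝ → ℝ) :
    ∀ᵐ t ∂volume.restrict (Ioc 0 T),
      (∫ r in Ioc 0 T, φ r * truncKernel T k r t) * (∫ s in Ioc 0 T, ψ s * truncKernel T k s t)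
        = volterraAdjoint T k φ t * volterraAdjoint T k ψ t := by
  filter_upwards [ae_restrict_Ioc_mem_Ioo] with t ht
  rw [setIntegral_mul_left_eq φ ht, setIntegral_mul_left_eq ψ ht]

theorem ae_integral_mul_mul_eq (φ ψ : ℝ → ℝ) :
    ∀ᵐ p ∂(volume.restrict (Ioc 0 T)).prod (volume.restrict (Ioc 0 T)),
      ∫ t in Ioc 0 T, φ p.1 * truncKernel T k p.1 t * (ψ p.2 * truncKernel T k p.2 t)
        = volterraGram k p.1 p.2 * φ p.1 * ψ p.2 := by
  filter_upwards [Measure.quasiMeasurePreserving_fst.ae ae_restrict_Ioc_mem_Ioo,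
    Measure.quasiMeasurePreserving_snd.ae ae_restrict_Ioc_mem_Ioo] with p hr hs
  simp_rw [mul_mul_mul_comm (φ p.1), integral_const_mul, setIntegral_mul_eq hr hs]
  ring

theorem integrable_prod (hα : 0 < α) (hβ₁ : β < 1 / 2) (hA : 0 ≤ A)
    (hkc : ContinuousOn (Function.uncurry k) (volterraDomain T))
    (hk : VolterraKernelBound T A α β k) {φ ψ : ℝ → ℝ} {Cφ Cψ : ℝ} (hφ : Measurable φ)
    (hφC : ∀ r, |φ r| ≤ Cφ) (hψ : Measurable ψ) (hψC : ∀ r, |ψ r| ≤ Cψ) :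
    Integrable (fun p : (ℝ × ℝ) × ℝ =>
        φ p.1.1 * truncKernel T k p.1.1 p.2 * (ψ p.1.2 * truncKernel T k p.1.2 p.2))
      (((volume.restrict (Ioc 0 T)).prod (volume.restrict (Ioc 0 T))).prod
        (volume.restrict (Ioc 0 T))) := by
  set M := A * (T ^ α / α)
  have hmeas : ∀ {χ : ℝ → ℝ}, Measurable χ →
      Measurable (Function.uncurry fun r t => χ r * truncKernel T k r t) :=
    fun hχ => (hχ.comp measurable_fst).mul (measurable hkc)
  have hnorm : ∀ {χ : ℝ → ℝ} {C : ℝ}, Measurable χ → (∀ r, |χ r| ≤ C) → ∀ t ∈ Ioo 0 T,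
      ∫ r in Ioc 0 T, ‖χ r * truncKernel T k r t‖ ≤ C * M * t ^ (-β) :=
    fun hχ hχC t ht => (setIntegral_le_integral (integrable_mul hα hkc hk ht.1 hχ hχC).norm
      (ae_of_all _ fun _ => norm_nonneg _)).trans (integral_abs_mul_le hα hA hkc hk ht.1 ht.2 hχC)
  refine integrable_mul_of_integral_norm_mul_le (hmeas hφ) (hmeas hψ) ?_ ?_
    (((intervalIntegral.intervalIntegrable_rpow' (by linarith : -1 < -(2 * β))).1).const_mul
      (Cφ * M * (Cψ * M))) ?_
  · filter_upwards [ae_restrict_Ioc_mem_Ioo] with t ht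
    exact (integrable_mul hα hkc hk ht.1 hφ hφC).restrict
  · filter_upwards [ae_restrict_Ioc_mem_Ioo] with t ht
    exact (integrable_mul hα hkc hk ht.1 hψ hψC).restrict
  · filter_upwards [ae_restrict_Ioc_mem_Ioo] with t ht
    calc (∫ r in Ioc 0 T, ‖φ r * truncKernel T k r t‖) *
          ∫ r in Ioc 0 T, ‖ψ r * truncKernel T k r t‖
        ≤ Cφ * M * t ^ (-β) * (Cψ * M * t ^ (-β)) :=
          mul_le_mul (hnorm hφ hφC t ht) (hnorm hψ hψC t ht)
            (integral_nonneg fun _ => norm_nonneg _)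
            ((integral_nonneg fun _ => norm_nonneg _).trans (hnorm hφ hφC t ht))
      _ = Cφ * M * (Cψ * M) * t ^ (-(2 * β)) := by
          rw [show -(2 * β) = -β + -β by ring, Real.rpow_add ht.1]
          ring

end truncKernel

namespace VolterraKernelBound

variable {T A α β : ℝ} {k : ℝ → ℝ → ℝ} {r s t : ℝ}

theorem intervalIntegrable_mul (hk : VolterraKernelBound T A α β k) (hα : 0 < α)
    (hkc : ContinuousOn (Function.uncurry k) (volterraDomain T)) {χ : ℝ → ℝ} {C : ℝ}
    (hχ : Measurable χ) (hχC : ∀ r, |χ r| ≤ C) (ht : t ∈ Ioo 0 T) :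
    IntervalIntegrable (fun r => χ r * k r t) volume t T := by
  rw [intervalIntegrable_iff_integrableOn_Ioo_of_le ht.2.le]
  exact (truncKernel.integrable_mul hα hkc hk ht.1 hχ hχC).integrableOn.congr_fun
    (fun r hr => by simp only [truncKernel.eq_of_lt ht.1 hr.1 hr.2]) measurableSet_Ioo

theorem intervalIntegrable_mul_of_ne (hk : VolterraKernelBound T A α β k) (hα₀ : 0 < α)
    (hα₁ : α ≤ 1) (hβ₀ : 0 ≤ β) (hβ₁ : β < 1 / 2) (hA : 0 ≤ A)
    (hkc : ContinuousOn (Function.uncurry k) (volterraDomain T)) (hr : r ∈ Ioo 0 T)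
    (hs : s ∈ Ioo 0 T) (hrs : r ≠ s) :
    IntervalIntegrable (fun t => k r t * k s t) volume 0 (min r s) := by
  rw [intervalIntegrable_iff_integrableOn_Ioo_of_le (le_min hr.1.le hs.1.le)]
  refine (truncKernel.integrableOn_mul hα₀ hα₁ hβ₀ hβ₁ hA hkc hk hr.2 hs.2 hrs).congr_fun
    (fun t ht => ?_) measurableSet_Ioo
  simp only [truncKernel.eq_of_lt ht.1 (lt_min_iff.1 ht.2).1 hr.2,
    truncKernel.eq_of_lt ht.1 (lt_min_iff.1 ht.2).2 hs.2]

section Bilinear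

variable {φ ψ : ℝ → ℝ} {Cφ Cψ : ℝ}

theorem intervalIntegrable_volterraAdjoint_mul (hk : VolterraKernelBound T A α β k)
    (hT : 0 ≤ T) (hα : 0 < α) (hβ : β < 1 / 2) (hA : 0 ≤ A)
    (hkc : ContinuousOn (Function.uncurry k) (volterraDomain T)) (hφ : Measurable φ)
    (hφC : ∀ r, |φ r| ≤ Cφ) (hψ : Measurable ψ) (hψC : ∀ r, |ψ r| ≤ Cψ) :
    IntervalIntegrable (fun t => volterraAdjoint T k φ t * volterraAdjoint T k ψ t) volume 0 T := by
  rw [intervalIntegrable_iff_integrableOn_Ioc_of_le hT]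
  refine ((truncKernel.integrable_prod hα hβ hA hkc hk hφ hφC hψ hψC).integral_prod_right.congr
    (ae_of_all _ fun t => ?_)).congr (truncKernel.ae_integral_mul_integral_eq φ ψ)
  exact integral_prod_mul (fun r => φ r * truncKernel T k r t) (fun s => ψ s * truncKernel T k s t)

theorem integrableOn_volterraGram_mul (hk : VolterraKernelBound T A α β k)
    (hα : 0 < α) (hβ : β < 1 / 2) (hA : 0 ≤ A)
    (hkc : ContinuousOn (Function.uncurry k) (volterraDomain T)) (hφ : Measurable φ)
    (hφC : ∀ r, |φ r| ≤ Cφ) (hψ : Measurable ψ) (hψC : ∀ r, |ψ r| ≤ Cψ) :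
    IntegrableOn (fun p : ℝ × ℝ => volterraGram k p.1 p.2 * φ p.1 * ψ p.2)
      (Ioc 0 T ×ˢ Ioc 0 T) (volume.prod volume) := by
  rw [IntegrableOn, ← Measure.prod_restrict]
  exact (truncKernel.integrable_prod hα hβ hA hkc hk hφ hφC hψ hψC).integral_prod_left.congr
    (truncKernel.ae_integral_mul_mul_eq φ ψ)

theorem integral_volterraAdjoint_mul (hk : VolterraKernelBound T A α β k)
    (hT : 0 ≤ T) (hα : 0 < α) (hβ : β < 1 / 2) (hA : 0 ≤ A)
    (hkc : ContinuousOn (Function.uncurry k) (volterraDomain T)) (hφ : Measurable φ)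
    (hφC : ∀ r, |φ r| ≤ Cφ) (hψ : Measurable ψ) (hψC : ∀ r, |ψ r| ≤ Cψ) :
    ∫ t in 0..T, volterraAdjoint T k φ t * volterraAdjoint T k ψ t
      = ∫ r in 0..T, ∫ s in 0..T, volterraGram k r s * φ r * ψ s := by
  have hF := truncKernel.integrable_prod hα hβ hA hkc hk hφ hφC hψ hψC
  have hG := truncKernel.ae_integral_mul_mul_eq (T := T) (k := k) φ ψ
  simp_rw [intervalIntegral.integral_of_le hT]
  calc ∫ t in Ioc 0 T, volterraAdjoint T k φ t * volterraAdjoint T k ψ t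
      = ∫ t in Ioc 0 T, (∫ r in Ioc 0 T, φ r * truncKernel T k r t) *
          ∫ s in Ioc 0 T, ψ s * truncKernel T k s t :=
        (integral_congr_ae (truncKernel.ae_integral_mul_integral_eq φ ψ)).symm
    _ = ∫ r in Ioc 0 T, ∫ s in Ioc 0 T, ∫ t in Ioc 0 T,
          φ r * truncKernel T k r t * (ψ s * truncKernel T k s t) :=
        integral_mul_integral_eq_integral_integral hF
    _ = ∫ r in Ioc 0 T, ∫ s in Ioc 0 T, volterraGram k r s * φ r * ψ s :=
        (integral_prod _ hF.integral_prod_left).symm.trans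
          ((integral_congr_ae hG).trans (integral_prod _ (hF.integral_prod_left.congr hG)))

end Bilinear

end VolterraKernelBound

theorem stmt12_general (T : ℝ) (hT : 0 < T)
    (K' : ℝ → ℝ → ℝ)
    -- (H1)
    (hK'cont : ContinuousOn (fun p : ℝ × ℝ => K' p.1 p.2)
      {p : ℝ × ℝ | 0 < p.2 ∧ p.2 < p.1 ∧ p.1 < T})
    -- (H2)
    (α β c : ℝ) (hα : α ∈ Ioo (0:ℝ) (1/2)) (hβ : β ∈ Ioo (0:ℝ) (1/2)) (hc : 0 < c)
    (hH2 : ∀ s t : ℝ, 0 < s → s < t → t < T →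
      |K' t s| ≤ c * (t - s) ^ (α - 1) * (t / s) ^ β)
    -- bounded measurable φ, ψ
    (φ ψ : ℝ → ℝ) (hφm : Measurable φ) (hψm : Measurable ψ)
    (Cφ Cψ : ℝ) (hφb : ∀ r, |φ r| ≤ Cφ) (hψb : ∀ r, |ψ r| ≤ Cψ)
    -- the operator K_T^* and the kernel φ₀
    (Kφ Kψ : ℝ → ℝ) (φ₀ : ℝ → ℝ → ℝ)
    (hKφ : ∀ t, Kφ t = ∫ r in t..T, φ r * K' r t)
    (hKψ : ∀ t, Kψ t = ∫ r in t..T, ψ r * K' r t)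
    (hφ₀ : ∀ r s, φ₀ r s = ∫ t in (0:ℝ)..min r s, K' r t * K' s t) :
    (∀ t ∈ Ioo (0:ℝ) T, IntervalIntegrable (fun r => φ r * K' r t) volume t T)
    ∧ (∀ t ∈ Ioo (0:ℝ) T, IntervalIntegrable (fun r => ψ r * K' r t) volume t T)
    ∧ (∀ r ∈ Ioo (0:ℝ) T, ∀ s ∈ Ioo (0:ℝ) T, r ≠ s →
        IntervalIntegrable (fun t => K' r t * K' s t) volume 0 (min r s))
    ∧ IntervalIntegrable (fun t => Kφ t * Kψ t) volume 0 T
    ∧ IntegrableOn (fun p : ℝ × ℝ => φ₀ p.1 p.2 * φ p.1 * ψ p.2)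
        (Ioc 0 T ×ˢ Ioc 0 T) (volume.prod volume)
    ∧ ∫ t in (0:ℝ)..T, Kφ t * Kψ t
        = ∫ r in (0:ℝ)..T, ∫ s in (0:ℝ)..T, φ₀ r s * φ r * ψ s := by
  obtain ⟨hα₀, hα₁⟩ := hα
  obtain ⟨hβ₀, hβ₁⟩ := hβ
  obtain rfl : Kφ = volterraAdjoint T K' φ := funext hKφ
  obtain rfl : Kψ = volterraAdjoint T K' ψ := funext hKψ
  obtain rfl : φ₀ = volterraGram K' := funext fun r => funext (hφ₀ r)
  have hk : VolterraKernelBound T (c * T ^ β) α β K' :=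
    volterraKernelBound_of_abs_le hβ₀.le hc.le hH2
  have hA : 0 ≤ c * T ^ β := by positivity
  exact ⟨fun t => hk.intervalIntegrable_mul hα₀ hK'cont hφm hφb,
    fun t => hk.intervalIntegrable_mul hα₀ hK'cont hψm hψb,
    fun r hr s hs => hk.intervalIntegrable_mul_of_ne hα₀ (by linarith) hβ₀.le hβ₁ hA hK'cont hr hs,
    hk.intervalIntegrable_volterraAdjoint_mul hT.le hα₀ hβ₁ hA hK'cont hφm hφb hψm hψb,
    hk.integrableOn_volterraGram_mul hα₀ hβ₁ hA hK'cont hφm hφb hψm hψb,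
    hk.integral_volterraAdjoint_mul hT.le hα₀ hβ₁ hA hK'cont hφm hφb hψm hψb⟩

/-- the isometry-type identity
`∫_0^T (K_T^*φ)_t (K_T^*ψ)_t dt = ∫_0^T ∫_0^T φ₀(r,s) φ(r) ψ(s) ds dr`
for bounded measurable `φ, ψ`, where `φ₀(r,s) = ∫_0^{min(r,s)} K'(r,t) K'(s,t) dt`,
together with the absolute convergence of all the integrals involved. -/
theorem stmt12 (T : ℝ) (hT : 0 < T)
    (K K' : ℝ → ℝ → ℝ)
    -- Volterra kernel
    (hVolterra : ∀ t s : ℝ, t < s → K t s = 0)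
    -- (H1)
    (hKcont : ContinuousOn (fun p : ℝ × ℝ => K p.1 p.2)
      {p : ℝ × ℝ | 0 < p.2 ∧ p.2 ≤ p.1 ∧ p.1 < T})
    (hK' : ∀ s t : ℝ, 0 < s → s < t → t < T → HasDerivAt (fun r => K r s) (K' t s) t)
    (hK'cont : ContinuousOn (fun p : ℝ × ℝ => K' p.1 p.2)
      {p : ℝ × ℝ | 0 < p.2 ∧ p.2 < p.1 ∧ p.1 < T})
    -- (H2)
    (α β c : ℝ) (hα : α ∈ Ioo (0:ℝ) (1/2)) (hβ : β ∈ Ioo (0:ℝ) (1/2)) (hc : 0 < c)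
    (hH2 : ∀ s t : ℝ, 0 < s → s < t → t < T →
      |K' t s| ≤ c * (t - s) ^ (α - 1) * (t / s) ^ β)
    -- bounded measurable φ, ψ
    (φ ψ : ℝ → ℝ) (hφm : Measurable φ) (hψm : Measurable ψ)
    (Cφ Cψ : ℝ) (hφb : ∀ r, |φ r| ≤ Cφ) (hψb : ∀ r, |ψ r| ≤ Cψ)
    -- the operator K_T^* and the kernel φ₀
    (Kφ Kψ : ℝ → ℝ) (φ₀ : ℝ → ℝ → ℝ)
    (hKφ : ∀ t, Kφ t = ∫ r in t..T, φ r * K' r t)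
    (hKψ : ∀ t, Kψ t = ∫ r in t..T, ψ r * K' r t)
    (hφ₀ : ∀ r s, φ₀ r s = ∫ t in (0:ℝ)..min r s, K' r t * K' s t) :
    (∀ t ∈ Ioo (0:ℝ) T, IntervalIntegrable (fun r => φ r * K' r t) volume t T)
    ∧ (∀ t ∈ Ioo (0:ℝ) T, IntervalIntegrable (fun r => ψ r * K' r t) volume t T)
    ∧ (∀ r ∈ Ioo (0:ℝ) T, ∀ s ∈ Ioo (0:ℝ) T, r ≠ s →
        IntervalIntegrable (fun t => K' r t * K' s t) volume 0 (min r s))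
    ∧ IntervalIntegrable (fun t => Kφ t * Kψ t) volume 0 T
    ∧ IntegrableOn (fun p : ℝ × ℝ => φ₀ p.1 p.2 * φ p.1 * ψ p.2)
        (Ioc 0 T ×ˢ Ioc 0 T) (volume.prod volume)
    ∧ ∫ t in (0:ℝ)..T, Kφ t * Kψ t
        = ∫ r in (0:ℝ)..T, ∫ s in (0:ℝ)..T, φ₀ r s * φ r * ψ s :=
  stmt12_general T hT K' hK'cont α β c hα hβ hc hH2 φ ψ hφm hψm Cφ Cψ hφb hψb Kφ Kψ φ₀ hKφ hKψ hφ₀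
end

section
/- Let T > 0, 0 ≤ t₀ < T, and let K : [0,T]² → ℝ be a Volterra kernel satisfying (H1) and (H2). Define K̃_{t₀}(s) = ∫_{t₀}^s (∂K/∂s)(s,u) du for s ∈ (t₀, T], and suppose K̃_{t₀}(s) ≠ 0 for all s ∈ (t₀, T]. Let Z : [t₀,T] → ℝ be continuous and suppose that for every t ∈ (t₀, T], one has ∫_u^t (∂K/∂v)(v,u)·Z(v) dv = 0 for almost every u ∈ [t₀, t]. Then Z(s) = 0 for all s ∈ [t₀, T]. -/
open MeasureTheory Set intervalIntegral Topology Filter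

/-! For almost every `u`, the hypothesis holds simultaneously at all rational times, so by
continuity `x ↦ ∫_u^x ∂K(v,u) Z(v) dv` vanishes on `(u, T)`. Bound (H2) makes the integrand
integrable near `v = u`, so by the fundamental theorem of calculus the derivative
`∂K(t,u) Z(t)` vanishes too. If `Z(t) ≠ 0` this forces `∂K(t,u) = 0` for a.e. `u ∈ (t₀, t)`,
i.e. `K̃_{t₀}(t) = 0`. Hence `Z = 0` on `(t₀, T)`, and on `[t₀, T]` by continuity. -/

theorem intervalIntegrable_of_norm_le_rpow_sub {E : Type*} [NormedAddCommGroup E] {f : ℝ → E}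
    {a b C α : ℝ} (hab : a ≤ b) (hα : 0 < α) (hf : ContinuousOn f (Ioc a b))
    (hbound : ∀ v ∈ Ioc a b, ‖f v‖ ≤ C * (v - a) ^ (α - 1)) :
    IntervalIntegrable f volume a b := by
  have hdom : IntervalIntegrable (fun v => C * (v - a) ^ (α - 1)) volume a b := by
    have := ((intervalIntegrable_rpow' (r := α - 1) (a := 0) (b := b - a)
      (by linarith)).comp_sub_right a).const_mul C
    simpa only [zero_add, sub_add_cancel] using this
  rw [intervalIntegrable_iff_integrableOn_Ioc_of_le hab] at hdom ⊢
  exact hdom.mono' (hf.aestronglyMeasurable measurableSet_Ioc)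
    ((ae_restrict_iff' measurableSet_Ioc).mpr (.of_forall hbound))

theorem eqOn_of_eqOn_ratCast {Y : Type*} [TopologicalSpace Y] [T2Space Y] {f g : ℝ → Y}
    {U : Set ℝ} (hU : IsOpen U) (hf : ContinuousOn f U) (hg : ContinuousOn g U)
    (h : ∀ q : ℚ, (q : ℝ) ∈ U → f q = g q) : EqOn f g U := by
  refine EqOn.of_subset_closure (s := U ∩ range ((↑) : ℚ → ℝ)) ?_ hf hg inter_subset_left
    (Rat.denseRange_cast.open_subset_closure_inter hU)
  rintro _ ⟨hqU, q, rfl⟩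
  exact h q hqU

theorem eqOn_zero_of_hasDerivAt_of_ratCast {g g' : ℝ → ℝ} {U : Set ℝ} (hU : IsOpen U)
    (hg : ∀ r ∈ U, HasDerivAt g (g' r) r) (h : ∀ q : ℚ, (q : ℝ) ∈ U → g q = 0) :
    EqOn g' 0 U := by
  have hzero : EqOn g 0 U :=
    eqOn_of_eqOn_ratCast hU (fun r hr => (hg r hr).continuousAt.continuousWithinAt)
      continuousOn_const h
  intro r hr
  exact (hg r hr).unique <| (hasDerivAt_const r 0).congr_of_eventuallyEq <|
    eventually_of_mem (hU.mem_nhds hr) hzero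

theorem eqOn_Icc_of_eqOn_Ioo {Y : Type*} [TopologicalSpace Y] [T2Space Y] {f g : ℝ → Y}
    {a b : ℝ} (hab : a < b) (hf : ContinuousOn f (Icc a b)) (hg : ContinuousOn g (Icc a b))
    (h : EqOn f g (Ioo a b)) : EqOn f g (Icc a b) :=
  h.of_subset_closure hf hg Ioo_subset_Icc_self (closure_Ioo hab.ne).symm.subset

theorem ae_forall_ratCast_of_forall_ae_restrict {μ : Measure ℝ} {P : ℝ → ℝ → Prop} {a b : ℝ}
    (h : ∀ t ∈ Ioc a b, ∀ᵐ u ∂(μ.restrict (Icc a t)), P t u) :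
    ∀ᵐ u ∂μ, ∀ q : ℚ, (q : ℝ) ∈ Ioc a b → u ∈ Icc a (q : ℝ) → P q u := by
  rw [ae_all_iff]
  intro q
  by_cases hq : (q : ℝ) ∈ Ioc a b
  · filter_upwards [(ae_restrict_iff' measurableSet_Icc).mp (h q hq)] with u hu _ using hu
  · exact .of_forall fun u hq' => absurd hq' hq

section AdjointKernel

variable {t₀ T α β c : ℝ} {K' : ℝ → ℝ → ℝ} {Z : ℝ → ℝ}

theorem norm_kernel_mul_le (hβ : 0 ≤ β) (hc : 0 ≤ c)
    (hH2 : ∀ s t : ℝ, 0 < s → s < t → t < T → |K' t s| ≤ c * (t - s) ^ (α - 1) * (t / s) ^ β)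
    {u r M : ℝ} (hu : 0 < u) (hrT : r < T) (hM : ∀ v ∈ Ioc u r, ‖Z v‖ ≤ M) :
    ∀ v ∈ Ioc u r, ‖K' v u * Z v‖ ≤ c * (r / u) ^ β * M * (v - u) ^ (α - 1) := by
  rintro v ⟨huv, hvr⟩
  have hM0 : 0 ≤ M := (norm_nonneg _).trans (hM v ⟨huv, hvr⟩)
  have hsing : 0 ≤ (v - u) ^ (α - 1) := Real.rpow_nonneg (sub_nonneg.mpr huv.le) _
  have hratio : (v / u) ^ β ≤ (r / u) ^ β :=
    Real.rpow_le_rpow (div_nonneg (hu.trans huv).le hu.le)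
      (div_le_div_of_nonneg_right hvr hu.le) hβ
  calc ‖K' v u * Z v‖ = |K' v u| * ‖Z v‖ := by rw [norm_mul, Real.norm_eq_abs]
    _ ≤ c * (v - u) ^ (α - 1) * (v / u) ^ β * M :=
        mul_le_mul (hH2 u v hu huv (hvr.trans_lt hrT)) (hM v ⟨huv, hvr⟩) (norm_nonneg _)
          (le_trans (abs_nonneg _) (hH2 u v hu huv (hvr.trans_lt hrT)))
    _ ≤ c * (v - u) ^ (α - 1) * (r / u) ^ β * M := by gcongr
    _ = c * (r / u) ^ β * M * (v - u) ^ (α - 1) := by ring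

theorem hasDerivAt_integral_kernel_mul (hα : 0 < α) (hβ : 0 ≤ β) (hc : 0 ≤ c)
    (hH2 : ∀ s t : ℝ, 0 < s → s < t → t < T → |K' t s| ≤ c * (t - s) ^ (α - 1) * (t / s) ^ β)
    (hK'cont : ContinuousOn (fun p : ℝ × ℝ => K' p.1 p.2)
      {p : ℝ × ℝ | 0 < p.2 ∧ p.2 < p.1 ∧ p.1 < T})
    (hZ : ContinuousOn Z (Icc t₀ T)) (ht₀ : 0 ≤ t₀) {u r : ℝ} (hu : t₀ < u) (hr : r ∈ Ioo u T) :
    HasDerivAt (fun x => ∫ v in u..x, K' v u * Z v) (K' r u * Z r) r := by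
  have hu0 : 0 < u := ht₀.trans_lt hu
  have hcont : ContinuousOn (fun v => K' v u * Z v) (Ioo u T) :=
    (hK'cont.comp (continuous_id.prodMk continuous_const).continuousOn
      fun v hv => ⟨hu0, hv.1, hv.2⟩).mul (hZ.mono fun v hv => ⟨hu.le.trans hv.1.le, hv.2.le⟩)
  obtain ⟨M, hM⟩ := isCompact_Icc.exists_bound_of_continuousOn hZ
  have hint : IntervalIntegrable (fun v => K' v u * Z v) volume u r :=
    intervalIntegrable_of_norm_le_rpow_sub hr.1.le hα
      (hcont.mono fun v hv => ⟨hv.1, hv.2.trans_lt hr.2⟩)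
      (norm_kernel_mul_le hβ hc hH2 hu0 hr.2
        fun v hv => hM v ⟨hu.le.trans hv.1.le, hv.2.trans hr.2.le⟩)
  exact integral_hasDerivAt_right hint (hcont.stronglyMeasurableAtFilter isOpen_Ioo r hr)
    (hcont.continuousAt (Ioo_mem_nhds hr.1 hr.2))

theorem eqOn_zero_Ioo_of_adjoint_eq_zero (hα : 0 < α) (hβ : 0 ≤ β) (hc : 0 ≤ c)
    (hH2 : ∀ s t : ℝ, 0 < s → s < t → t < T → |K' t s| ≤ c * (t - s) ^ (α - 1) * (t / s) ^ β)
    (hK'cont : ContinuousOn (fun p : ℝ × ℝ => K' p.1 p.2)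
      {p : ℝ × ℝ | 0 < p.2 ∧ p.2 < p.1 ∧ p.1 < T})
    (hKtilde : ∀ s ∈ Ioo t₀ T, (∫ u in t₀..s, K' s u) ≠ 0)
    (hZ : ContinuousOn Z (Icc t₀ T)) (ht₀ : 0 ≤ t₀)
    (hzero : ∀ t ∈ Ioc t₀ T, ∀ᵐ u ∂(volume.restrict (Icc t₀ t)),
      ∫ v in u..t, K' v u * Z v = 0) :
    EqOn Z 0 (Ioo t₀ T) := by
  have hvanish : ∀ᵐ u, t₀ < u → ∀ t ∈ Ioo u T, K' t u * Z t = 0 := by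
    filter_upwards [ae_forall_ratCast_of_forall_ae_restrict hzero] with u hu htu
    exact eqOn_zero_of_hasDerivAt_of_ratCast isOpen_Ioo
      (fun r hr => hasDerivAt_integral_kernel_mul hα hβ hc hH2 hK'cont hZ ht₀ htu hr)
      fun q hq => hu q ⟨htu.trans hq.1, hq.2.le⟩ ⟨htu.le, hq.1.le⟩
  intro t ht
  by_contra hZt
  apply hKtilde t ht
  rw [integral_of_le ht.1.le, integral_Ioc_eq_integral_Ioo]
  refine setIntegral_eq_zero_of_ae_eq_zero ?_
  filter_upwards [hvanish] with u hu hut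
  exact (mul_eq_zero.mp (hu hut.1 t ⟨hut.2, ht.2⟩)).resolve_right hZt

end AdjointKernel

theorem stmt15_general (T t₀ : ℝ) (ht₀ : 0 ≤ t₀) (ht₀T : t₀ < T)
    (K' : ℝ → ℝ → ℝ)
    -- (H1)
    (hK'cont : ContinuousOn (fun p : ℝ × ℝ => K' p.1 p.2)
      {p : ℝ × ℝ | 0 < p.2 ∧ p.2 < p.1 ∧ p.1 < T})
    -- (H2)
    (α β c : ℝ) (hα : α ∈ Ioo (0:ℝ) (1/2)) (hβ : β ∈ Ioo (0:ℝ) (1/2)) (hc : 0 < c)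
    (hH2 : ∀ s t : ℝ, 0 < s → s < t → t < T →
      |K' t s| ≤ c * (t - s) ^ (α - 1) * (t / s) ^ β)
    -- K̃_{t₀}(s) ≠ 0 on (t₀, T]
    (hKtilde : ∀ s ∈ Ioc t₀ T, (∫ u in t₀..s, K' s u) ≠ 0)
    -- continuous Z with (K_t^* Z)_u = 0 for a.e. u, for every t
    (Z : ℝ → ℝ) (hZ : ContinuousOn Z (Icc t₀ T))
    (hzero : ∀ t ∈ Ioc t₀ T, ∀ᵐ u ∂(volume.restrict (Icc t₀ t)),
      ∫ v in u..t, K' v u * Z v = 0) :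
    ∀ s ∈ Icc t₀ T, Z s = 0 := by
  have hopen : EqOn Z 0 (Ioo t₀ T) :=
    eqOn_zero_Ioo_of_adjoint_eq_zero hα.1 hβ.1.le hc.le hH2 hK'cont
      (fun s hs => hKtilde s (Ioo_subset_Ioc_self hs)) hZ ht₀ hzero
  exact fun s hs => eqOn_Icc_of_eqOn_Ioo ht₀T hZ continuousOn_const hopen hs

/-- injectivity of the adjoint operator `K_t^*` on continuous functions
under the condition `K̃_{t₀}(s) = ∫_{t₀}^s ∂K/∂s(s,u) du ≠ 0` on `(t₀, T]`. -/
theorem stmt15 (T t₀ : ℝ) (hT : 0 < T) (ht₀ : 0 ≤ t₀) (ht₀T : t₀ < T)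
    (K K' : ℝ → ℝ → ℝ)
    -- Volterra kernel
    (hVolterra : ∀ t s : ℝ, t < s → K t s = 0)
    -- (H1)
    (hKcont : ContinuousOn (fun p : ℝ × ℝ => K p.1 p.2)
      {p : ℝ × ℝ | 0 < p.2 ∧ p.2 ≤ p.1 ∧ p.1 < T})
    (hK' : ∀ s t : ℝ, 0 < s → s < t → t < T → HasDerivAt (fun r => K r s) (K' t s) t)
    (hK'cont : ContinuousOn (fun p : ℝ × ℝ => K' p.1 p.2)
      {p : ℝ × ℝ | 0 < p.2 ∧ p.2 < p.1 ∧ p.1 < T})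
    -- (H2)
    (α β c : ℝ) (hα : α ∈ Ioo (0:ℝ) (1/2)) (hβ : β ∈ Ioo (0:ℝ) (1/2)) (hc : 0 < c)
    (hH2 : ∀ s t : ℝ, 0 < s → s < t → t < T →
      |K' t s| ≤ c * (t - s) ^ (α - 1) * (t / s) ^ β)
    -- K̃_{t₀}(s) ≠ 0 on (t₀, T]
    (hKtilde : ∀ s ∈ Ioc t₀ T, (∫ u in t₀..s, K' s u) ≠ 0)
    -- continuous Z with (K_t^* Z)_u = 0 for a.e. u, for every t
    (Z : ℝ → ℝ) (hZ : ContinuousOn Z (Icc t₀ T))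
    (hzero : ∀ t ∈ Ioc t₀ T, ∀ᵐ u ∂(volume.restrict (Icc t₀ t)),
      ∫ v in u..t, K' v u * Z v = 0) :
    ∀ s ∈ Icc t₀ T, Z s = 0 :=
  stmt15_general T t₀ ht₀ ht₀T K' hK'cont α β c hα hβ hc hH2 hKtilde Z hZ hzero
end
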